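/- arXiv:math/9210203 — 7 statements merged into one kernel-verified Lean document; each statement's English description precedes it below -/
import Mathlib

section
/- Let κ ≤ θ be uncountable cardinals. If there exists a first countable topological space X that is <κ-collectionwise Hausdorff but not weakly θ-collectionwise Hausdorff, then there exists a family ℋ = {H_{αβ} : α < β < θ} of finite closed-downward subsets of ω × ω such that (a) for every A ⊆ θ with |A| < κ there is f : θ → ω with (f(α),f(β)) ∉ H_{αβ} for all α < β in A, and (b) for every B ⊆ θ of cardinality θ and every f : θ → ω there are α < β in B with (f(α),f(β)) ∈ H_{αβ}. -/
open Cardinal Set TopologicalSpace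

noncomputable section

/-- A subset `A` of a topological space is *separated* if there is a pairwise disjoint
family of open sets `U x` with `x ∈ U x` for each `x ∈ A`. -/
def IsSeparatedSet {X : Type*} [TopologicalSpace X] (A : Set X) : Prop :=
  ∃ U : X → Set X, (∀ x ∈ A, IsOpen (U x)) ∧ (∀ x ∈ A, x ∈ U x) ∧
    ∀ x ∈ A, ∀ y ∈ A, x ≠ y → Disjoint (U x) (U y)

/-- A closed discrete subset of a topological space. -/
def IsClosedDiscreteSet {X : Type*} [TopologicalSpace X] (A : Set X) : Prop :=
  IsClosed A ∧ DiscreteTopology A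

/-- `X` is `<κ`-collectionwise Hausdorff. -/
def CwHLt (X : Type) [TopologicalSpace X] (κ : Cardinal) : Prop :=
  ∀ A : Set X, IsClosedDiscreteSet A → #A < κ → IsSeparatedSet A

/-- `X` is `≤θ`-collectionwise Hausdorff. -/
def CwHLe (X : Type) [TopologicalSpace X] (θ : Cardinal) : Prop :=
  ∀ A : Set X, IsClosedDiscreteSet A → #A ≤ θ → IsSeparatedSet A

/-- `X` is weakly `θ`-collectionwise Hausdorff. -/
def WeaklyCwH (X : Type) [TopologicalSpace X] (θ : Cardinal) : Prop :=
  ∀ A : Set X, IsClosedDiscreteSet A → #A = θ → ∃ B ⊆ A, #B = θ ∧ IsSeparatedSet B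

/-- A space is zero-dimensional if it has a base of clopen sets. -/
def ZeroDimensional (X : Type*) [TopologicalSpace X] : Prop :=
  ∃ B : Set (Set X), IsTopologicalBasis B ∧ ∀ U ∈ B, IsClopen U

/-- A subset of `ω × ω` is closed downward. -/
def IsCDW (H : Set (ℕ × ℕ)) : Prop :=
  ∀ p ∈ H, ∀ q : ℕ × ℕ, q.1 ≤ p.1 → q.2 ≤ p.2 → q ∈ H

/-- The fan `F_{θ,ω}`: points of `ι × ℕ` are isolated, and the sets
`B_f = {*} ∪ {(α, n) : f α ≤ n}` form a neighborhood base at `* = none`. -/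
def fanTopology (ι : Type*) : TopologicalSpace (Option (ι × ℕ)) where
  IsOpen U := none ∈ U → ∃ f : ι → ℕ, ∀ p : ι × ℕ, f p.1 ≤ p.2 → some p ∈ U
  isOpen_univ := fun _ => ⟨fun _ => 0, fun _ _ => trivial⟩
  isOpen_inter := by
    intro U V hU hV hmem
    obtain ⟨f, hf⟩ := hU hmem.1
    obtain ⟨g, hg⟩ := hV hmem.2
    exact ⟨fun α => max (f α) (g α), fun p hp =>
      ⟨hf p (le_trans (le_max_left _ _) hp), hg p (le_trans (le_max_right _ _) hp)⟩⟩
  isOpen_sUnion := by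
    intro S hS hmem
    obtain ⟨U, hU, hnU⟩ := hmem
    obtain ⟨f, hf⟩ := hS U hU hnU
    exact ⟨f, fun p hp => ⟨U, hU, hf p hp⟩⟩

/-- The square of the fan `F_{θ,ω}`, with the product topology. -/
def fanSqTopology (ι : Type*) : TopologicalSpace (Option (ι × ℕ) × Option (ι × ℕ)) :=
  @instTopologicalSpaceProd _ _ (fanTopology ι) (fanTopology ι)

/-- A subset `S` of `F_{θ,ω} × F_{θ,ω}` is `θ`-good if `(*,*)` is in the closure of `S`,
but not in the closure of any subset of `S` of cardinality `< θ`. -/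
def IsThetaGood {ι : Type} (θ : Cardinal) (S : Set (Option (ι × ℕ) × Option (ι × ℕ))) : Prop :=
  (none, none) ∈ @closure _ (fanSqTopology ι) S ∧
    ∀ T ⊆ S, #T < θ → (none, none) ∉ @closure _ (fanSqTopology ι) T

/-- `C` is club in the (well-ordered) type `ι`: unbounded and closed under suprema of its
bounded nonempty subsets. -/
def IsClubIn {ι : Type*} [LinearOrder ι] (C : Set ι) : Prop :=
  (∀ x : ι, ∃ y ∈ C, x < y) ∧
    ∀ s ⊆ C, s.Nonempty → ∀ x : ι, IsLUB s x → x ∈ C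

/-- `S` is stationary in `ι`: it meets every club. -/
def IsStationaryIn {ι : Type*} [LinearOrder ι] (S : Set ι) : Prop :=
  ∀ C : Set ι, IsClubIn C → (S ∩ C).Nonempty

/-- `C` is a club subset of (the set of elements below) `γ`. -/
def IsClubBelow {ι : Type*} [LinearOrder ι] (C : Set ι) (γ : ι) : Prop :=
  C ⊆ Set.Iio γ ∧ (∀ x < γ, ∃ y ∈ C, x < y) ∧
    ∀ s ⊆ C, s.Nonempty → ∀ x < γ, IsLUB s x → x ∈ C

/-- `S` is stationary below `γ`: it meets every club subset of `γ`. -/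
def IsStationaryBelow {ι : Type*} [LinearOrder ι] (S : Set ι) (γ : ι) : Prop :=
  ∀ C : Set ι, IsClubBelow C γ → (S ∩ C).Nonempty

/-- `γ` is a limit element: nonzero and with no immediate predecessor. -/
def IsLimitElem {ι : Type*} [LinearOrder ι] (γ : ι) : Prop :=
  (∃ x, x < γ) ∧ ∀ x < γ, ∃ y, x < y ∧ y < γ

/-- `α` is a limit point of the set `s`. -/
def IsLimitPtOf {ι : Type*} [LinearOrder ι] (α : ι) (s : Set ι) : Prop :=
  (∃ x, x < α) ∧ ∀ x < α, ∃ y ∈ s, x < y ∧ y < α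

/-- `α` is a limit of countable cofinality: there is a strictly increasing `ω`-sequence
below `α` whose range is cofinal in `α`. -/
def CofOmega {ι : Type*} [LinearOrder ι] (α : ι) : Prop :=
  ∃ b : ℕ → ι, StrictMono b ∧ (∀ n, b n < α) ∧ ∀ ξ < α, ∃ n, ξ ≤ b n

/-- `E` is non-reflecting: `E ∩ γ` is non-stationary in `γ` for every limit `γ`. -/
def NonReflecting {ι : Type*} [LinearOrder ι] (E : Set ι) : Prop :=
  ∀ γ : ι, IsLimitElem γ → ¬ IsStationaryBelow (E ∩ Set.Iio γ) γ

/-- The principle `□(θ)` for the well-order `ι` (of order type the initial ordinal of `θ`). -/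
def SquareTheta (ι : Type*) [LinearOrder ι] : Prop :=
  ∃ C : ι → Set ι,
    (∀ α, IsLimitElem α → IsClubBelow (C α) α) ∧
    (∀ β, IsLimitElem β → ∀ α, IsLimitPtOf α (C β) → C α = C β ∩ Set.Iio α) ∧
    ¬ ∃ D : Set ι, IsClubIn D ∧ ∀ α, IsLimitPtOf α D → C α = D ∩ Set.Iio α

/-- `g` weakly bounds `h β` (where `h β` represents the function `h_β : β → ω`,
via `ξ ↦ h β ξ` for `ξ < β`): there is `n` with `g ξ + n > h β ξ` for all `ξ < β`. -/
def WeaklyBounds {ι : Type*} [LinearOrder ι] (g : ι → ℕ) (h : ι → ι → ℕ) (β : ι) : Prop :=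
  ∃ n : ℕ, ∀ ξ < β, h β ξ < g ξ + n

/-- The family `{h_β : β ∈ A}` is weakly bounded: a single `g` weakly bounds every member. -/
def WeaklyBoundedFam {ι : Type*} [LinearOrder ι] (h : ι → ι → ℕ) (A : Set ι) : Prop :=
  ∃ g : ι → ℕ, ∀ β ∈ A, WeaklyBounds g h β

/-- The `θ`-family `h` is initially weakly bounded. -/
def IWB {ι : Type} [LinearOrder ι] (θ : Cardinal) (h : ι → ι → ℕ) : Prop :=
  ∀ A : Set ι, #A < θ → WeaklyBoundedFam h A

/-- The `θ`-family `h` is non-extendible: the whole family is not weakly bounded. -/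
def NonExtendible {ι : Type*} [LinearOrder ι] (h : ι → ι → ℕ) : Prop :=
  ¬ WeaklyBoundedFam h Set.univ

end

section StatementZeroAux

variable {X : Type} [TopologicalSpace X]

private lemma closedDiscrete_subset {A S : Set X} (hA : IsClosedDiscreteSet A) (hS : S ⊆ A) :
    IsClosedDiscreteSet S := by
  obtain ⟨hAc, hAd⟩ := hA
  refine ⟨?_, DiscreteTopology.of_subset hAd hS⟩
  refine isClosed_of_closure_subset fun x hx => ?_
  have hxA : x ∈ A := hAc.closure_subset (closure_mono hS hx)
  have hopen : IsOpen ({(⟨x, hxA⟩ : A)} : Set A) := isOpen_discrete _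
  rw [isOpen_induced_iff] at hopen
  obtain ⟨O, hO, hOe⟩ := hopen
  have hxO : x ∈ O := by
    have h1 : (⟨x, hxA⟩ : A) ∈ ({(⟨x, hxA⟩ : A)} : Set A) := rfl
    rw [← hOe] at h1
    exact h1
  obtain ⟨y, hyO, hyS⟩ := mem_closure_iff.mp hx O hO hxO
  have hyA : y ∈ A := hS hyS
  have h2 : (⟨y, hyA⟩ : A) ∈ (Subtype.val ⁻¹' O : Set A) := hyO
  rw [hOe] at h2
  have hyx : y = x := congrArg Subtype.val h2
  exact hyx ▸ hyS

private lemma exists_small_nbhd [FirstCountableTopology X]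
    {κ : Cardinal} (hκ : ℵ₀ < κ) (hcwh : CwHLt X κ) {A : Set X}
    (hA : IsClosedDiscreteSet A) {x : X} (hx : x ∈ A) {V : Set X} (hV : IsOpen V)
    (hxV : x ∈ V) :
    ∃ U : Set X, IsOpen U ∧ x ∈ U ∧ U ⊆ V ∧ closure U ∩ A ⊆ {x} := by
  by_contra h
  push_neg at h
  obtain ⟨s, hs⟩ := (nhds x).exists_antitone_basis
  have key : ∀ n : ℕ, ∃ y, (y ∈ closure (interior (s n) ∩ V) ∩ A) ∧ y ≠ x := by
    intro n
    have h1 : IsOpen (interior (s n) ∩ V) := isOpen_interior.inter hV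
    have h2 : x ∈ interior (s n) ∩ V :=
      ⟨mem_interior_iff_mem_nhds.mpr (hs.1.mem_of_mem trivial), hxV⟩
    have h3 := h _ h1 h2 inter_subset_right
    rw [Set.not_subset] at h3
    obtain ⟨y, hy1, hy2⟩ := h3
    exact ⟨y, hy1, hy2⟩
  choose y hy hyx using key
  have hSA : (insert x (Set.range y) : Set X) ⊆ A := by
    rintro z (rfl | ⟨n, rfl⟩)
    · exact hx
    · exact (hy n).2
  have hScd := closedDiscrete_subset hA hSA
  have hScard : #(insert x (Set.range y) : Set X) < κ := by
    refine lt_of_le_of_lt ?_ hκ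
    have hco : (insert x (Set.range y) : Set X).Countable := (Set.countable_range y).insert x
    haveI := hco.to_subtype
    exact Cardinal.mk_le_aleph0
  obtain ⟨W, hWo, hWm, hWd⟩ := hcwh _ hScd hScard
  have hxS : x ∈ (insert x (Set.range y) : Set X) := Set.mem_insert _ _
  have hWx : W x ∩ V ∈ nhds x :=
    Filter.inter_mem ((hWo x hxS).mem_nhds (hWm x hxS)) (hV.mem_nhds hxV)
  obtain ⟨n0, -, hn0⟩ := hs.1.mem_iff.mp hWx
  have hySmem : y n0 ∈ (insert x (Set.range y) : Set X) :=
    Set.mem_insert_of_mem _ ⟨n0, rfl⟩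
  have hdisj := hWd _ hySmem _ hxS (hyx n0)
  have hsub : interior (s n0) ∩ V ⊆ W x := fun z hz => (hn0 (interior_subset hz.1)).1
  obtain ⟨z, hz1, hz2⟩ := mem_closure_iff.mp (hy n0).1 _ (hWo _ hySmem) (hWm _ hySmem)
  exact (Set.disjoint_left.mp hdisj hz1) (hsub hz2)

private noncomputable def niceSeq (F : Set X → Set X) (s : ℕ → Set X) : ℕ → Set X
  | 0 => F (interior (s 0))
  | n + 1 => F (niceSeq F s n ∩ interior (s (n + 1)))

private lemma exists_nice_basis [FirstCountableTopology X]
    {κ : Cardinal} (hκ : ℵ₀ < κ) (hcwh : CwHLt X κ) {A : Set X}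
    (hA : IsClosedDiscreteSet A) {x : X} (hx : x ∈ A) :
    ∃ U : ℕ → Set X, (∀ n, IsOpen (U n)) ∧ (∀ n, x ∈ U n) ∧
      (∀ m n, m ≤ n → U n ⊆ U m) ∧ (∀ n, closure (U n) ∩ A ⊆ {x}) ∧
      (∀ V ∈ nhds x, ∃ n, U n ⊆ V) := by
  obtain ⟨s, hs⟩ := (nhds x).exists_antitone_basis
  have step : ∀ W : Set X, ∃ U : Set X, IsOpen W → x ∈ W →
      IsOpen U ∧ x ∈ U ∧ U ⊆ W ∧ closure U ∩ A ⊆ {x} := by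
    intro W
    by_cases hW : IsOpen W ∧ x ∈ W
    · obtain ⟨U, h1, h2, h3, h4⟩ := exists_small_nbhd hκ hcwh hA hx hW.1 hW.2
      exact ⟨U, fun _ _ => ⟨h1, h2, h3, h4⟩⟩
    · exact ⟨∅, fun h1 h2 => absurd ⟨h1, h2⟩ hW⟩
  choose F hF using step
  have hxs : ∀ n, x ∈ interior (s n) :=
    fun n => mem_interior_iff_mem_nhds.mpr (hs.1.mem_of_mem trivial)
  have main : ∀ n, IsOpen (niceSeq F s n) ∧ x ∈ niceSeq F s n ∧
      niceSeq F s n ⊆ interior (s n) ∧ closure (niceSeq F s n) ∩ A ⊆ {x} := by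
    intro n
    induction n with
    | zero =>
      obtain ⟨h1, h2, h3, h4⟩ := hF (interior (s 0)) isOpen_interior (hxs 0)
      exact ⟨h1, h2, h3, h4⟩
    | succ n ih =>
      have hi : IsOpen (niceSeq F s n ∩ interior (s (n + 1))) := ih.1.inter isOpen_interior
      have hxi : x ∈ niceSeq F s n ∩ interior (s (n + 1)) := ⟨ih.2.1, hxs (n + 1)⟩
      obtain ⟨h1, h2, h3, h4⟩ := hF (niceSeq F s n ∩ interior (s (n + 1))) hi hxi
      exact ⟨h1, h2, h3.trans inter_subset_right, h4⟩
  have hstep : ∀ n, niceSeq F s (n + 1) ⊆ niceSeq F s n := by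
    intro n
    have hi : IsOpen (niceSeq F s n ∩ interior (s (n + 1))) :=
      (main n).1.inter isOpen_interior
    have hxi : x ∈ niceSeq F s n ∩ interior (s (n + 1)) := ⟨(main n).2.1, hxs (n + 1)⟩
    exact (hF (niceSeq F s n ∩ interior (s (n + 1))) hi hxi).2.2.1.trans inter_subset_left
  have hmono : ∀ m n, m ≤ n → niceSeq F s n ⊆ niceSeq F s m := by
    intro m n h
    induction n with
    | zero =>
      have : m = 0 := Nat.le_zero.mp h
      subst this; exact subset_rfl
    | succ n ih =>
      rcases Nat.lt_or_ge m (n + 1) with h' | h'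
      · exact (hstep n).trans (ih (Nat.lt_succ_iff.mp h'))
      · have : m = n + 1 := le_antisymm h h'
        subst this; exact subset_rfl
  refine ⟨niceSeq F s, fun n => (main n).1, fun n => (main n).2.1, hmono,
    fun n => (main n).2.2.2, ?_⟩
  intro V hV
  obtain ⟨n, -, hn⟩ := hs.1.mem_iff.mp hV
  exact ⟨n, (main n).2.2.1.trans (interior_subset.trans hn)⟩

end StatementZeroAux

/-- From a first countable, `<κ`-cwH, not weakly `θ`-cwH space,
one obtains a family `ℋ = {H_{αβ} : α < β < θ}` of finite c.d.w. subsets of `ω × ω`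
satisfying (a) and (b). -/
theorem statement0 (κ θ : Cardinal) (hκ : ℵ₀ < κ) (hθ : ℵ₀ < θ) (hκθ : κ ≤ θ)
    (hX : ∃ (X : Type) (t : TopologicalSpace X),
      @FirstCountableTopology X t ∧ @CwHLt X t κ ∧ ¬ @WeaklyCwH X t θ) :
    ∃ H : θ.ord.ToType → θ.ord.ToType → Set (ℕ × ℕ),
      (∀ α β : θ.ord.ToType, α < β → (H α β).Finite ∧ IsCDW (H α β)) ∧
      (∀ A : Set θ.ord.ToType, #A < κ →
        ∃ f : θ.ord.ToType → ℕ, ∀ α ∈ A, ∀ β ∈ A, α < β → (f α, f β) ∉ H α β) ∧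
      (∀ B : Set θ.ord.ToType, #B = θ → ∀ f : θ.ord.ToType → ℕ,
        ∃ α ∈ B, ∃ β ∈ B, α < β ∧ (f α, f β) ∈ H α β) := by
  obtain ⟨X, t, hfc, hcwh, hnw⟩ := hX
  letI : TopologicalSpace X := t
  haveI : FirstCountableTopology X := hfc
  rw [WeaklyCwH] at hnw
  push_neg at hnw
  obtain ⟨A, hAcd, hAcard, hAbad⟩ := hnw
  have hι : #(θ.ord.ToType) = θ := Cardinal.mk_ord_toType θ
  have hmkA : #(θ.ord.ToType) = #A := by rw [hι, hAcard]
  obtain ⟨eqv⟩ := Cardinal.eq.mp hmkA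
  set e : θ.ord.ToType → X := fun α => (eqv α : X) with he_def
  have he : Function.Injective e := fun a b h => eqv.injective (Subtype.ext h)
  have heA : ∀ α, e α ∈ A := fun α => (eqv α).2
  have hbase : ∀ α : θ.ord.ToType, ∃ U : ℕ → Set X, (∀ n, IsOpen (U n)) ∧
      (∀ n, e α ∈ U n) ∧ (∀ m n, m ≤ n → U n ⊆ U m) ∧
      (∀ n, closure (U n) ∩ A ⊆ {e α}) ∧ (∀ V ∈ nhds (e α), ∃ n, U n ⊆ V) :=
    fun α => exists_nice_basis hκ hcwh hAcd (heA α)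
  choose U hUo hUx hUm hUc hUb using hbase
  refine ⟨fun α β => {p : ℕ × ℕ | (U α p.1 ∩ U β p.2).Nonempty}, ?_, ?_, ?_⟩
  · intro α β hab
    have hne : e α ≠ e β := fun h => (ne_of_lt hab) (he h)
    constructor
    · have hcol : ∀ n : ℕ, ∃ m, U β m ⊆ (closure (U α n))ᶜ := by
        intro n
        have hnot : e β ∉ closure (U α n) := by
          intro hmem
          exact hne (Set.mem_singleton_iff.mp (hUc α n ⟨hmem, heA β⟩)).symm
        exact hUb β _ ((isClosed_closure.isOpen_compl).mem_nhds hnot)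
      choose m hm using hcol
      have hrow : ∃ n0, U α n0 ⊆ (closure (U β 0))ᶜ := by
        have hnot : e α ∉ closure (U β 0) := fun hmem =>
          hne (Set.mem_singleton_iff.mp (hUc β 0 ⟨hmem, heA α⟩))
        exact hUb α _ ((isClosed_closure.isOpen_compl).mem_nhds hnot)
      obtain ⟨n0, hn0⟩ := hrow
      refine Set.Finite.subset ((Set.finite_Iio n0).prod
        (Set.finite_Iio ((Finset.range n0).sup m))) ?_
      rintro ⟨n, k⟩ hp
      obtain ⟨z, hz1, hz2⟩ := hp
      have hnn0 : n < n0 := by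
        by_contra hn
        push_neg at hn
        exact (hn0 (hUm α n0 n hn hz1))
          (subset_closure (hUm β 0 k (Nat.zero_le k) hz2))
      refine Set.mem_prod.mpr ⟨hnn0, ?_⟩
      show k < (Finset.range n0).sup m
      by_contra hk
      push_neg at hk
      have hmk : m n ≤ k := le_trans (Finset.le_sup (Finset.mem_range.mpr hnn0)) hk
      exact (hm n (hUm β (m n) k hmk hz2)) (subset_closure hz1)
    · rintro ⟨n, k⟩ hp ⟨n', k'⟩ h1 h2
      obtain ⟨z, hz1, hz2⟩ := hp
      exact ⟨z, hUm α n' n h1 hz1, hUm β k' k h2 hz2⟩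
  · intro A' hA'
    have hsub : e '' A' ⊆ A := by rintro z ⟨α, -, rfl⟩; exact heA α
    have hcd := closedDiscrete_subset hAcd hsub
    have hcard : #(e '' A') < κ := by rw [Cardinal.mk_image_eq he]; exact hA'
    obtain ⟨W, hWo, hWm, hWd⟩ := hcwh _ hcd hcard
    have hpick : ∀ α : θ.ord.ToType, ∃ n, α ∈ A' → U α n ⊆ W (e α) := by
      intro α
      by_cases hα : α ∈ A'
      · obtain ⟨n, hn⟩ := hUb α (W (e α))
          ((hWo _ ⟨α, hα, rfl⟩).mem_nhds (hWm _ ⟨α, hα, rfl⟩))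
        exact ⟨n, fun _ => hn⟩
      · exact ⟨0, fun h => absurd h hα⟩
    choose f hf using hpick
    refine ⟨f, fun α hα β hβ hab hmem => ?_⟩
    obtain ⟨z, hz1, hz2⟩ := hmem
    have hne : e α ≠ e β := fun h => (ne_of_lt hab) (he h)
    exact Set.disjoint_left.mp
      (hWd _ ⟨α, hα, rfl⟩ _ ⟨β, hβ, rfl⟩ hne) (hf α hα hz1) (hf β hβ hz2)
  · intro B hB f
    by_contra hno
    push_neg at hno
    have hsub : e '' B ⊆ A := by rintro z ⟨α, -, rfl⟩; exact heA α
    have hcard : #(e '' B) = θ := by rw [Cardinal.mk_image_eq he]; exact hB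
    refine hAbad (e '' B) hsub hcard ?_
    haveI hne : Nonempty (θ.ord.ToType) := by
      rw [← Cardinal.mk_ne_zero_iff (α := θ.ord.ToType), hι]
      exact (aleph0_pos.trans hθ).ne'
    have hinv : ∀ α : θ.ord.ToType, Function.invFun e (e α) = α :=
      fun α => Function.leftInverse_invFun he α
    refine ⟨fun z => U (Function.invFun e z) (f (Function.invFun e z)), ?_, ?_, ?_⟩
    · rintro z ⟨α, -, rfl⟩
      simp only [hinv]
      exact hUo α (f α)
    · rintro z ⟨α, -, rfl⟩
      simp only [hinv]
      exact hUx α (f α)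
    · rintro z ⟨α, hαB, rfl⟩ w ⟨β, hβB, rfl⟩ hzw
      have hab : α ≠ β := fun h => hzw (by rw [h])
      simp only [hinv]
      rw [Set.disjoint_iff_inter_eq_empty]
      rcases lt_or_gt_of_ne hab with h | h
      · exact Set.not_nonempty_iff_eq_empty.mp (hno α hαB β hβB h)
      · rw [Set.inter_comm]
        exact Set.not_nonempty_iff_eq_empty.mp (hno β hβB α hαB h)
end

section
/- Let κ ≤ θ be uncountable cardinals. Suppose there exists a family ℋ = {H_{αβ} : α < β < θ} of finite closed-downward subsets of ω × ω such that (a) for every A ⊆ θ with |A| < κ there is f : θ → ω with (f(α),f(β)) ∉ H_{αβ} for all α < β in A, and (b) for every B ⊆ θ of cardinality θ and every f : θ → ω there are α < β in B with (f(α),f(β)) ∈ H_{αβ}. Then there exists a first countable, zero-dimensional topological space that is <κ-collectionwise Hausdorff but not weakly θ-collectionwise Hausdorff. -/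
open Cardinal Set TopologicalSpace

noncomputable section Statement1Aux
open Topology
namespace Statement1Aux

variable {ι : Type} [LinearOrder ι]

abbrev XX (ι : Type) : Type := ι ⊕ (ι × ι × ℕ × ℕ)

def B (H : ι → ι → Set (ℕ × ℕ)) (α : ι) (k : ℕ) : Set (XX ι) :=
  {x | x = Sum.inl α ∨
    (∃ β n m, x = Sum.inr (α, β, n, m) ∧ α < β ∧ (n, m) ∈ H α β ∧ k ≤ n) ∨
    (∃ ξ n m, x = Sum.inr (ξ, α, n, m) ∧ ξ < α ∧ (n, m) ∈ H ξ α ∧ k ≤ m)}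

lemma inl_mem_B (H : ι → ι → Set (ℕ × ℕ)) (α : ι) (k : ℕ) : Sum.inl α ∈ B H α k :=
  Or.inl rfl

lemma B_anti (H : ι → ι → Set (ℕ × ℕ)) (α : ι) {k l : ℕ} (hkl : k ≤ l) :
    B H α l ⊆ B H α k := by
  rintro x (h | ⟨β, n, m, rfl, h1, h2, h3⟩ | ⟨ξ, n, m, rfl, h1, h2, h3⟩)
  · exact Or.inl h
  · exact Or.inr (Or.inl ⟨β, n, m, rfl, h1, h2, hkl.trans h3⟩)
  · exact Or.inr (Or.inr ⟨ξ, n, m, rfl, h1, h2, hkl.trans h3⟩)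

def T (H : ι → ι → Set (ℕ × ℕ)) : TopologicalSpace (XX ι) where
  IsOpen U := ∀ α, Sum.inl α ∈ U → ∃ k, B H α k ⊆ U
  isOpen_univ := fun _ _ => ⟨0, fun _ _ => trivial⟩
  isOpen_inter := by
    intro U V hU hV α hα
    obtain ⟨k, hk⟩ := hU α hα.1
    obtain ⟨l, hl⟩ := hV α hα.2
    exact ⟨max k l, fun x hx =>
      ⟨hk (B_anti H α (le_max_left k l) hx), hl (B_anti H α (le_max_right k l) hx)⟩⟩
  isOpen_sUnion := by
    intro S hS α hα
    obtain ⟨U, hU, hαU⟩ := hα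
    obtain ⟨k, hk⟩ := hS U hU α hαU
    exact ⟨k, fun x hx => ⟨U, hU, hk hx⟩⟩

lemma isOpen_iff (H : ι → ι → Set (ℕ × ℕ)) (U : Set (XX ι)) :
    IsOpen[T H] U ↔ ∀ α, Sum.inl α ∈ U → ∃ k, B H α k ⊆ U := Iff.rfl

lemma isOpen_B (H : ι → ι → Set (ℕ × ℕ)) (α : ι) (k : ℕ) : IsOpen[T H] (B H α k) := by
  intro γ hγ
  rcases hγ with h | ⟨β, n, m, h, _⟩ | ⟨ξ, n, m, h, _⟩
  · obtain rfl : γ = α := Sum.inl.injEq _ _ ▸ h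
    exact ⟨k, subset_rfl⟩
  · exact absurd h (by simp)
  · exact absurd h (by simp)

lemma isOpen_singleton_inr (H : ι → ι → Set (ℕ × ℕ)) (p : ι × ι × ℕ × ℕ) :
    IsOpen[T H] ({Sum.inr p} : Set (XX ι)) := by
  intro γ hγ
  simp at hγ

lemma mem_nhds_iff' (H : ι → ι → Set (ℕ × ℕ)) (α : ι) (s : Set (XX ι)) :
    s ∈ @nhds _ (T H) (Sum.inl α) ↔ ∃ k, B H α k ⊆ s := by
  rw [@mem_nhds_iff]
  constructor
  · rintro ⟨t, hts, ht, hαt⟩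
    obtain ⟨k, hk⟩ := ht α hαt
    exact ⟨k, hk.trans hts⟩
  · rintro ⟨k, hk⟩
    exact ⟨B H α k, hk, isOpen_B H α k, inl_mem_B H α k⟩

lemma inr_mem_nhds_iff (H : ι → ι → Set (ℕ × ℕ)) (p : ι × ι × ℕ × ℕ) (s : Set (XX ι)) :
    s ∈ @nhds _ (T H) (Sum.inr p) ↔ Sum.inr p ∈ s := by
  rw [@mem_nhds_iff]
  constructor
  · rintro ⟨t, hts, _, hpt⟩; exact hts hpt
  · intro h
    exact ⟨{Sum.inr p}, by simpa using h, isOpen_singleton_inr H p, rfl⟩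

/-- The key intersection computation. -/
lemma mem_inter_B (H : ι → ι → Set (ℕ × ℕ)) {α β : ι} (hαβ : α < β) {k l : ℕ}
    {x : XX ι} (hx : x ∈ B H α k ∩ B H β l) :
    ∃ n m, x = Sum.inr (α, β, n, m) ∧ (n, m) ∈ H α β ∧ k ≤ n ∧ l ≤ m := by
  obtain ⟨h1, h2⟩ := hx
  rcases h1 with h1 | ⟨β', n, m, rfl, hb1, hb2, hb3⟩ | ⟨ξ, n, m, rfl, hb1, hb2, hb3⟩
  · subst h1
    rcases h2 with h2 | ⟨β'', n, m, h, _⟩ | ⟨ξ, n, m, h, _⟩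
    · exact absurd (Sum.inl_injective h2) hαβ.ne
    · exact absurd h (by simp)
    · exact absurd h (by simp)
  · rcases h2 with h2 | ⟨β'', n', m', h, hc1, hc2, hc3⟩ | ⟨ξ, n', m', h, hc1, hc2, hc3⟩
    · exact absurd h2 (by simp)
    · simp only [Sum.inr.injEq, Prod.mk.injEq] at h
      exact absurd h.1 hαβ.ne
    · simp only [Sum.inr.injEq, Prod.mk.injEq] at h
      obtain ⟨rfl, rfl, rfl, rfl⟩ := h
      exact ⟨n, m, rfl, hb2, hb3, hc3⟩
  · rcases h2 with h2 | ⟨β'', n', m', h, hc1, hc2, hc3⟩ | ⟨ξ', n', m', h, hc1, hc2, hc3⟩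
    · exact absurd h2 (by simp)
    · simp only [Sum.inr.injEq, Prod.mk.injEq] at h
      obtain ⟨rfl, rfl, rfl, rfl⟩ := h
      exact absurd (hαβ.trans hc1) (lt_irrefl _)
    · simp only [Sum.inr.injEq, Prod.mk.injEq] at h
      exact absurd h.2.1 hαβ.ne


lemma exists_bound {s : Set (ℕ × ℕ)} (h : s.Finite) :
    ∃ l : ℕ, ∀ p ∈ s, p.1 < l ∧ p.2 < l := by
  obtain ⟨c, hc⟩ := (h.image (fun p => max p.1 p.2)).bddAbove
  refine ⟨c + 1, fun p hp => ?_⟩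
  have := hc (Set.mem_image_of_mem _ hp)
  constructor <;> omega

/-- Disjointness criterion. -/
lemma disjoint_B (H : ι → ι → Set (ℕ × ℕ)) {α β : ι} (hαβ : α < β)
    (hcdw : IsCDW (H α β)) {k l : ℕ} (h : (k, l) ∉ H α β) :
    Disjoint (B H α k) (B H β l) := by
  rw [Set.disjoint_left]
  intro x hx hx'
  obtain ⟨n, m, rfl, hmem, hkn, hlm⟩ := mem_inter_B H hαβ ⟨hx, hx'⟩
  exact h (hcdw (n, m) hmem (k, l) hkn hlm)

/-- B(α,k) is disjoint from B(β,l) for large l, using finiteness. -/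
lemma eventually_disjoint_B (H : ι → ι → Set (ℕ × ℕ))
    (hfin : ∀ a b : ι, a < b → (H a b).Finite) {α β : ι} (hne : β ≠ α) (k : ℕ) :
    ∃ l, Disjoint (B H β l) (B H α k) := by
  rcases lt_or_gt_of_ne hne with hlt | hlt
  · -- β < α : intersection points are inr (β, α, n, m) with l ≤ n, k ≤ m
    obtain ⟨l, hl⟩ := exists_bound (hfin β α hlt)
    refine ⟨l, Set.disjoint_left.2 fun x hx hx' => ?_⟩
    obtain ⟨n, m, rfl, hmem, hln, hkm⟩ := mem_inter_B H hlt ⟨hx, hx'⟩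
    exact absurd hln (by have := (hl _ hmem).1; omega)
  · -- α < β : intersection points are inr (α, β, n, m) with k ≤ n, l ≤ m
    obtain ⟨l, hl⟩ := exists_bound (hfin α β hlt)
    refine ⟨l, Set.disjoint_left.2 fun x hx hx' => ?_⟩
    obtain ⟨n, m, rfl, hmem, hkn, hlm⟩ := mem_inter_B H hlt ⟨hx', hx⟩
    exact absurd hlm (by have := (hl _ hmem).2; omega)

lemma isClosed_B (H : ι → ι → Set (ℕ × ℕ))
    (hfin : ∀ a b : ι, a < b → (H a b).Finite) (α : ι) (k : ℕ) :
    IsClosed[T H] (B H α k) := by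
  rw [← @isOpen_compl_iff]
  intro β hβ
  have hne : β ≠ α := fun h => hβ (h ▸ inl_mem_B H α k)
  obtain ⟨l, hl⟩ := eventually_disjoint_B H hfin hne k
  exact ⟨l, fun x hx => Set.disjoint_left.1 hl hx⟩

lemma isClosed_singleton_inr (H : ι → ι → Set (ℕ × ℕ)) (p : ι × ι × ℕ × ℕ) :
    IsClosed[T H] ({Sum.inr p} : Set (XX ι)) := by
  rw [← @isOpen_compl_iff]
  intro γ _
  obtain ⟨x, y, n, m⟩ := p
  refine ⟨max n m + 1, fun z hz (hmem : z = _) => ?_⟩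
  subst hmem
  rcases hz with h | ⟨β, n', m', h, _, _, h3⟩ | ⟨ξ, n', m', h, _, _, h3⟩
  · exact absurd h (by simp)
  · simp only [Sum.inr.injEq, Prod.mk.injEq] at h
    omega
  · simp only [Sum.inr.injEq, Prod.mk.injEq] at h
    omega

lemma firstCountable (H : ι → ι → Set (ℕ × ℕ)) :
    @FirstCountableTopology (XX ι) (T H) := by
  letI := T H
  constructor
  intro x
  obtain (α | p) := x
  · have hb : (@nhds _ (T H) (Sum.inl α)).HasBasis (fun _ : ℕ => True) (B H α) := by
      refine ⟨fun s => ?_⟩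
      rw [mem_nhds_iff' H α s]
      simp
    exact hb.isCountablyGenerated
  · have hb : (@nhds _ (T H) (Sum.inr p)).HasBasis (fun _ : Unit => True)
        (fun _ => ({Sum.inr p} : Set (XX ι))) := by
      refine ⟨fun s => ?_⟩
      rw [inr_mem_nhds_iff H p s]
      simp [Set.singleton_subset_iff]
    exact hb.isCountablyGenerated

lemma zeroDim (H : ι → ι → Set (ℕ × ℕ))
    (hfin : ∀ a b : ι, a < b → (H a b).Finite) :
    @ZeroDimensional (XX ι) (T H) := by
  refine ⟨{V | (∃ p, V = {Sum.inr p}) ∨ ∃ α k, V = B H α k}, ?_, ?_⟩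
  · refine @isTopologicalBasis_of_isOpen_of_nhds _ (T H) _ ?_ ?_
    · rintro V (⟨p, rfl⟩ | ⟨α, k, rfl⟩)
      · exact isOpen_singleton_inr H p
      · exact isOpen_B H α k
    · rintro (α | p) U hx hU
      · obtain ⟨k, hk⟩ := hU α hx
        exact ⟨B H α k, Or.inr ⟨α, k, rfl⟩, inl_mem_B H α k, hk⟩
      · exact ⟨{Sum.inr p}, Or.inl ⟨p, rfl⟩, rfl, by simpa using hx⟩
  · rintro V (⟨p, rfl⟩ | ⟨α, k, rfl⟩)
    · exact ⟨isClosed_singleton_inr H p, isOpen_singleton_inr H p⟩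
    · exact ⟨isClosed_B H hfin α k, isOpen_B H α k⟩

end Statement1Aux
end Statement1Aux

/-- From a family `ℋ = {H_{αβ} : α < β < θ}` of finite c.d.w. subsets of
`ω × ω` satisfying (a) and (b), one obtains a first countable, zero-dimensional,
`<κ`-cwH space that is not weakly `θ`-cwH. -/
theorem statement1 (κ θ : Cardinal) (hκ : ℵ₀ < κ) (hθ : ℵ₀ < θ) (hκθ : κ ≤ θ)
    (H : θ.ord.ToType → θ.ord.ToType → Set (ℕ × ℕ))
    (hH : ∀ α β : θ.ord.ToType, α < β → (H α β).Finite ∧ IsCDW (H α β))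
    (ha : ∀ A : Set θ.ord.ToType, #A < κ →
      ∃ f : θ.ord.ToType → ℕ, ∀ α ∈ A, ∀ β ∈ A, α < β → (f α, f β) ∉ H α β)
    (hb : ∀ B : Set θ.ord.ToType, #B = θ → ∀ f : θ.ord.ToType → ℕ,
      ∃ α ∈ B, ∃ β ∈ B, α < β ∧ (f α, f β) ∈ H α β) :
    ∃ (X : Type) (t : TopologicalSpace X),
      @FirstCountableTopology X t ∧ @ZeroDimensional X t ∧
        @CwHLt X t κ ∧ ¬ @WeaklyCwH X t θ := by
  classical
  letI : TopologicalSpace (Statement1Aux.XX θ.ord.ToType) := Statement1Aux.T H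
  refine ⟨Statement1Aux.XX θ.ord.ToType, inferInstance, Statement1Aux.firstCountable H,
    Statement1Aux.zeroDim H (fun a b hab => (hH a b hab).1), ?_, ?_⟩
  · -- <κ-collectionwise Hausdorff
    rintro A ⟨-, hAdisc⟩ hAκ
    have hinj : Function.Injective
        (fun x : (Sum.inl ⁻¹' A : Set θ.ord.ToType) => (⟨Sum.inl x.1, x.2⟩ : A)) := by
      intro a b h
      exact Subtype.ext (Sum.inl_injective (congrArg Subtype.val h))
    obtain ⟨f, hf⟩ := ha (Sum.inl ⁻¹' A) ((Cardinal.mk_le_of_injective hinj).trans_lt hAκ)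
    have hk0 : ∀ α : θ.ord.ToType, ∃ k, Sum.inl α ∈ A →
        ∀ y ∈ A, y ∈ Statement1Aux.B H α k → y = Sum.inl α := by
      intro α
      by_cases hα : Sum.inl α ∈ A
      · have hop : IsOpen ({(⟨Sum.inl α, hα⟩ : A)} : Set A) := isOpen_discrete _
        rw [isOpen_induced_iff] at hop
        obtain ⟨V, hV, hVeq⟩ := hop
        have hαV : Sum.inl α ∈ V := by
          have h1 : (⟨Sum.inl α, hα⟩ : A) ∈ Subtype.val ⁻¹' V := by
            rw [hVeq]; exact rfl
          exact h1
        obtain ⟨k, hk⟩ := hV α hαV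
        refine ⟨k, fun _ y hy hyB => ?_⟩
        have h2 : (⟨y, hy⟩ : A) ∈ Subtype.val ⁻¹' V := hk hyB
        rw [hVeq] at h2
        exact congrArg Subtype.val h2
      · exact ⟨0, fun h => absurd h hα⟩
    choose k₀ hk₀ using hk0
    set U : Statement1Aux.XX θ.ord.ToType → Set (Statement1Aux.XX θ.ord.ToType) :=
      Sum.elim (fun α => Statement1Aux.B H α (max (f α) (k₀ α)))
        (fun p => {Sum.inr p}) with hU
    have hBsubf : ∀ α : θ.ord.ToType, U (Sum.inl α) ⊆ Statement1Aux.B H α (f α) := fun α =>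
      Statement1Aux.B_anti H α (le_max_left _ _)
    have hBsubk : ∀ α : θ.ord.ToType, U (Sum.inl α) ⊆ Statement1Aux.B H α (k₀ α) := fun α =>
      Statement1Aux.B_anti H α (le_max_right _ _)
    refine ⟨U, ?_, ?_, ?_⟩
    · rintro (α | p) _
      · exact Statement1Aux.isOpen_B H α _
      · exact Statement1Aux.isOpen_singleton_inr H p
    · rintro (α | p) _
      · exact Statement1Aux.inl_mem_B H α _
      · exact rfl
    · have key : ∀ α : θ.ord.ToType, ∀ p : θ.ord.ToType × θ.ord.ToType × ℕ × ℕ, Sum.inl α ∈ A → Sum.inr p ∈ A →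
          Disjoint (U (Sum.inl α)) (U (Sum.inr p)) := by
        intro α p hα hp
        refine Set.disjoint_right.2 ?_
        rintro x (rfl : x = Sum.inr p) hxB
        exact absurd (hk₀ α hα _ hp (hBsubk α hxB)) (by simp)
      rintro (α | p) hx (β | q) hy hne
      · rcases lt_trichotomy α β with hlt | heq | hlt
        · exact ((Statement1Aux.disjoint_B H hlt (hH α β hlt).2
            (hf α hx β hy hlt)).mono (hBsubf α) (hBsubf β))
        · exact absurd (congrArg Sum.inl heq) hne
        · exact ((Statement1Aux.disjoint_B H hlt (hH β α hlt).2
            (hf β hy α hx hlt)).mono (hBsubf β) (hBsubf α)).symm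
      · exact key α q hx hy
      · exact (key β p hy hx).symm
      · exact Set.disjoint_singleton.2 (fun h => hne h)
  · -- not weakly θ-cwH
    intro hW
    have hclosed : IsClosed (Set.range (Sum.inl : θ.ord.ToType → Statement1Aux.XX θ.ord.ToType)) := by
      rw [← isOpen_compl_iff]
      intro γ hγ
      exact absurd ⟨γ, rfl⟩ hγ
    have hdisc : DiscreteTopology (Set.range (Sum.inl : θ.ord.ToType → Statement1Aux.XX θ.ord.ToType)) := by
      rw [discreteTopology_iff_isOpen_singleton]
      rintro ⟨x, γ, rfl⟩
      rw [isOpen_induced_iff]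
      refine ⟨Statement1Aux.B H γ 0, Statement1Aux.isOpen_B H γ 0, ?_⟩
      ext ⟨y, hy⟩
      simp only [Set.mem_preimage, Set.mem_singleton_iff, Subtype.mk.injEq, Subtype.ext_iff]
      constructor
      · rintro (h | ⟨β, n, m, h, -⟩ | ⟨ξ, n, m, h, -⟩)
        · exact h
        · obtain ⟨δ, rfl⟩ := hy; exact absurd h (by simp)
        · obtain ⟨δ, rfl⟩ := hy; exact absurd h (by simp)
      · rintro rfl
        exact Statement1Aux.inl_mem_B H γ 0
    have hcardA : #(Set.range (Sum.inl : θ.ord.ToType → Statement1Aux.XX θ.ord.ToType)) = θ := by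
      rw [Cardinal.mk_range_eq _ Sum.inl_injective, Cardinal.mk_toType, Cardinal.card_ord]
    obtain ⟨B', hB'sub, hB'card, U, hUopen, hUmem, hUdisj⟩ :=
      hW _ ⟨hclosed, hdisc⟩ hcardA
    have hF : ∀ α : θ.ord.ToType, ∃ k, Sum.inl α ∈ B' → Statement1Aux.B H α k ⊆ U (Sum.inl α) := by
      intro α
      by_cases hα : Sum.inl α ∈ B'
      · obtain ⟨k, hk⟩ := hUopen _ hα α (hUmem _ hα)
        exact ⟨k, fun _ => hk⟩
      · exact ⟨0, fun h => absurd h hα⟩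
    choose g hg using hF
    have hB₀ : #(Sum.inl ⁻¹' B' : Set θ.ord.ToType) = θ := by
      have himg : Sum.inl '' (Sum.inl ⁻¹' B') = B' :=
        Set.image_preimage_eq_of_subset hB'sub
      calc #(Sum.inl ⁻¹' B' : Set θ.ord.ToType) = #(Sum.inl '' (Sum.inl ⁻¹' B'))
            := (Cardinal.mk_image_eq Sum.inl_injective).symm
        _ = #B' := by rw [himg]
        _ = θ := hB'card
    obtain ⟨α, hα, β, hβ, hαβ, hmem⟩ := hb _ hB₀ g
    have hz1 : Sum.inr (α, β, g α, g β) ∈ Statement1Aux.B H α (g α) :=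
      Or.inr (Or.inl ⟨β, g α, g β, rfl, hαβ, hmem, le_refl _⟩)
    have hz2 : Sum.inr (α, β, g α, g β) ∈ Statement1Aux.B H β (g β) :=
      Or.inr (Or.inr ⟨α, g α, g β, rfl, hαβ, hmem, le_refl _⟩)
    have hne : (Sum.inl α : Statement1Aux.XX θ.ord.ToType) ≠ Sum.inl β := by
      simpa using hαβ.ne
    exact Set.disjoint_left.1 (hUdisj _ hα _ hβ hne)
      (hg α hα hz1) (hg β hβ hz2)
end

section
/- Let κ ≤ θ be uncountable cardinals. There exists a first countable topological space that is <κ-collectionwise Hausdorff but not weakly θ-collectionwise Hausdorff if and only if there exists a first countable, zero-dimensional topological space that is <κ-collectionwise Hausdorff but not weakly θ-collectionwise Hausdorff. -/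
open Cardinal Set TopologicalSpace

section Statement2Aux

open Filter

variable {X : Type} [tX : TopologicalSpace X]

/-- Characterization of closed discrete sets via separating open sets. -/
lemma isCD_iff {A : Set X} :
    IsClosedDiscreteSet A ↔ IsClosed A ∧ ∀ x ∈ A, ∃ O, IsOpen O ∧ O ∩ A = {x} := by
  constructor
  · rintro ⟨hc, hd⟩
    refine ⟨hc, fun x hx => ?_⟩
    have h1 : IsOpen ({(⟨x, hx⟩ : A)} : Set A) := isOpen_discrete _
    rw [isOpen_induced_iff] at h1
    obtain ⟨O, hO, hOe⟩ := h1
    refine ⟨O, hO, ?_⟩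
    ext y
    constructor
    · rintro ⟨hyO, hyA⟩
      have h2 : (⟨y, hyA⟩ : A) ∈ (Subtype.val ⁻¹' O : Set A) := hyO
      rw [hOe] at h2
      simpa using congrArg Subtype.val h2
    · intro hy
      have hyx : y = x := hy
      subst hyx
      have h3 : (⟨y, hx⟩ : A) ∈ ({(⟨y, hx⟩ : A)} : Set A) := rfl
      rw [← hOe] at h3
      exact ⟨h3, hx⟩
  · rintro ⟨hc, h⟩
    refine ⟨hc, ?_⟩
    rw [discreteTopology_iff_isOpen_singleton]
    rintro ⟨x, hx⟩
    obtain ⟨O, hO, hOe⟩ := h x hx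
    have hxO : x ∈ O := by
      have : x ∈ O ∩ A := by rw [hOe]; rfl
      exact this.1
    have heq : ({⟨x, hx⟩} : Set A) = Subtype.val ⁻¹' O := by
      ext y
      simp only [Set.mem_singleton_iff, Set.mem_preimage]
      constructor
      · rintro rfl; exact hxO
      · intro hy
        have : (y : X) ∈ O ∩ A := ⟨hy, y.2⟩
        rw [hOe] at this
        exact Subtype.ext this
    rw [heq]
    exact hO.preimage continuous_subtype_val

/-- Subsets of closed discrete sets are closed discrete. -/
lemma isCD_subset {A B : Set X} (h : IsClosedDiscreteSet A) (hBA : B ⊆ A) :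
    IsClosedDiscreteSet B := by
  rw [isCD_iff] at h ⊢
  obtain ⟨hc, hd⟩ := h
  constructor
  · apply isClosed_of_closure_subset
    intro x hxB
    have hxA : x ∈ A := by
      have := closure_mono hBA hxB
      rwa [hc.closure_eq] at this
    obtain ⟨O, hO, hOe⟩ := hd x hxA
    have hxO : x ∈ O := by
      have : x ∈ O ∩ A := by rw [hOe]; rfl
      exact this.1
    obtain ⟨y, hyO, hyB⟩ := mem_closure_iff.mp hxB O hO hxO
    have hy : y ∈ O ∩ A := ⟨hyO, hBA hyB⟩
    rw [hOe] at hy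
    have : y = x := hy
    rwa [← this]
  · intro x hx
    obtain ⟨O, hO, hOe⟩ := hd x (hBA hx)
    have hxO : x ∈ O := by
      have : x ∈ O ∩ A := by rw [hOe]; rfl
      exact this.1
    refine ⟨O, hO, ?_⟩
    apply Set.Subset.antisymm
    · intro y hy
      have : y ∈ O ∩ A := ⟨hy.1, hBA hy.2⟩
      rwa [hOe] at this
    · intro y hy
      have hyx : y = x := hy
      subst hyx
      exact ⟨hxO, hx⟩

/-- A nice system of neighborhood bases along a closed discrete set. -/
structure NicePack (A : Set X) (u : ↥A → ℕ → Set X) : Prop where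
  opn : ∀ (a : ↥A) (n : ℕ), IsOpen (u a n)
  mem : ∀ (a : ↥A) (n : ℕ), (a : X) ∈ u a n
  anti : ∀ (a : ↥A) (m n : ℕ), m ≤ n → u a n ⊆ u a m
  base : ∀ (a : ↥A) (O : Set X), IsOpen O → (a : X) ∈ O → ∃ n, u a n ⊆ O
  notMemCl : ∀ a b : ↥A, b ≠ a → ∀ n, (b : X) ∉ closure (u a n)

lemma exists_nicePack [FirstCountableTopology X] {κ : Cardinal} (hκ : ℵ₀ < κ)
    (hcwh : CwHLt X κ) {A : Set X} (hA : IsClosedDiscreteSet A) :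
    ∃ u : ↥A → ℕ → Set X, NicePack A u := by
  have h1 : ∀ a : ↥A, ∃ u0 : ℕ → Set X, (∀ n, IsOpen (u0 n)) ∧ (∀ n, (a : X) ∈ u0 n) ∧
      (∀ m n : ℕ, m ≤ n → u0 n ⊆ u0 m) ∧
      (∀ O : Set X, IsOpen O → (a : X) ∈ O → ∃ n, u0 n ⊆ O) ∧
      (∀ b : ↥A, b ≠ a → ∀ n, (b : X) ∉ u0 n) := by
    intro a
    obtain ⟨φ, hφ1, hφ2⟩ := (nhds_basis_opens (a : X)).exists_antitone_subbasis
    obtain ⟨OA, hOA, hOAe⟩ := (isCD_iff.mp hA).2 (a : X) a.2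
    have haOA : (a : X) ∈ OA := by
      have : (a : X) ∈ OA ∩ A := by rw [hOAe]; rfl
      exact this.1
    refine ⟨fun n => φ n ∩ OA, fun n => (hφ1 n).2.inter hOA,
      fun n => ⟨(hφ1 n).1, haOA⟩, fun m n hmn => Set.inter_subset_inter
        (hφ2.antitone hmn) (le_refl _), ?_, ?_⟩
    · intro O hO haO
      obtain ⟨n, -, hn⟩ := hφ2.toHasBasis.mem_iff.mp (hO.mem_nhds haO)
      exact ⟨n, Set.inter_subset_left.trans hn⟩
    · intro b hb n hbmem
      have : (b : X) ∈ OA ∩ A := ⟨hbmem.2, b.2⟩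
      rw [hOAe] at this
      exact hb (Subtype.ext this)
  choose u0 hop hmem hanti hbase hexcl using h1
  have h2 : ∀ a : ↥A, ∃ N, ∀ b : ↥A, b ≠ a → (b : X) ∉ closure (u0 a N) := by
    intro a
    by_contra hcon
    push_neg at hcon
    choose b hb1 hb2 using hcon
    set C : Set X := insert (a : X) (Set.range fun N => ((b N : ↥A) : X)) with hC
    have hCA : C ⊆ A := by
      rintro x (rfl | ⟨N, rfl⟩)
      · exact a.2
      · exact (b N).2
    have hCcd := isCD_subset hA hCA
    have hCcount : C.Countable := (Set.countable_range _).insert _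
    have hCcard : #C < κ := lt_of_le_of_lt hCcount.le_aleph0 hκ
    obtain ⟨G, hGo, hGm, hGd⟩ := hcwh C hCcd hCcard
    have haC : (a : X) ∈ C := Set.mem_insert _ _
    obtain ⟨M, hM⟩ := hbase a (G (a : X)) (hGo _ haC) (hGm _ haC)
    have hbC : ((b M : ↥A) : X) ∈ C := Set.mem_insert_iff.mpr (Or.inr ⟨M, rfl⟩)
    have hvne : ((a : X)) ≠ ((b M : ↥A) : X) := by
      intro h
      exact hb1 M (Subtype.ext h.symm)
    have hdisj := hGd _ haC _ hbC hvne
    obtain ⟨z, hz1, hz2⟩ := mem_closure_iff.mp (hb2 M) (G _) (hGo _ hbC) (hGm _ hbC)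
    exact (Set.disjoint_left.mp hdisj (hM hz2) hz1).elim
  choose N hN using h2
  refine ⟨fun a n => u0 a (n + N a), ?_⟩
  constructor
  · intro a n; exact hop a _
  · intro a n; exact hmem a _
  · intro a m n hmn; exact hanti a _ _ (Nat.add_le_add_right hmn _)
  · intro a O hO haO
    obtain ⟨n, hn⟩ := hbase a O hO haO
    exact ⟨n, (hanti a n (n + N a) (Nat.le_add_right _ _)).trans hn⟩
  · intro a b hb n
    intro hmem'
    exact hN a b hb (closure_mono (hanti a (N a) (n + N a) (Nat.le_add_left _ _)) hmem')

end Statement2Aux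

section Statement2Y

open Filter

variable {X : Type} {A : Set X} (u : ↥A → ℕ → Set X)

/-- The intersection pattern of the neighborhood bases. -/
def Hset (a b : ↥A) : Set (ℕ × ℕ) := {p | (u a p.1 ∩ u b p.2).Nonempty}

/-- Isolated points of the new space. -/
def Epts : Set (↥A × ↥A × ℕ × ℕ) := {e | e.1 ≠ e.2.1 ∧ e.2.2 ∈ Hset u e.1 e.2.1}

/-- The underlying type of the new space. -/
def Yt : Type := ↥A ⊕ ↥(Epts u)

/-- The non-isolated points of the new space. -/
def Yinl (a : ↥A) : Yt u := Sum.inl a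

/-- The isolated points of the new space. -/
def Yinr (e : ↥(Epts u)) : Yt u := Sum.inr e

lemma Yt_cases (y : Yt u) : (∃ a, y = Yinl u a) ∨ (∃ e, y = Yinr u e) := by
  rcases (y : ↥A ⊕ ↥(Epts u)) with a | e
  · exact Or.inl ⟨a, rfl⟩
  · exact Or.inr ⟨e, rfl⟩

lemma Yinl_injective : Function.Injective (Yinl u) := fun a b h => Sum.inl.inj h

lemma Yinl_ne_Yinr (a : ↥A) (e : ↥(Epts u)) : Yinl u a ≠ Yinr u e := fun h =>
  Sum.inl_ne_inr (h : (Sum.inl a : ↥A ⊕ ↥(Epts u)) = Sum.inr e)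

lemma Yinr_injective : Function.Injective (Yinr u) := fun a b h => Sum.inr.inj h

/-- Basic neighborhoods of the non-isolated points of the new space. -/
def Vset (a : ↥A) (j : ℕ) : Set (Yt u) :=
  {y | y = Yinl u a ∨ ∃ e : ↥(Epts u), y = Yinr u e ∧
    ((e.val.1 = a ∧ j ≤ e.val.2.2.1) ∨ (e.val.2.1 = a ∧ j ≤ e.val.2.2.2))}

lemma Vset_anti (a : ↥A) {j j' : ℕ} (h : j ≤ j') : Vset u a j' ⊆ Vset u a j := by
  rintro y (rfl | ⟨e, rfl, he⟩)
  · exact Or.inl rfl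
  · exact Or.inr ⟨e, rfl, he.imp (fun h' => ⟨h'.1, h.trans h'.2⟩) (fun h' => ⟨h'.1, h.trans h'.2⟩)⟩

/-- The topology of the new space. -/
def tY : TopologicalSpace (Yt u) where
  IsOpen O := ∀ a : ↥A, Yinl u a ∈ O → ∃ j, Vset u a j ⊆ O
  isOpen_univ := fun a _ => ⟨0, fun y _ => trivial⟩
  isOpen_inter := by
    intro O P hO hP a ha
    obtain ⟨j, hj⟩ := hO a ha.1
    obtain ⟨k, hk⟩ := hP a ha.2
    exact ⟨max j k, fun y hy => ⟨hj (Vset_anti u a (le_max_left j k) hy),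
      hk (Vset_anti u a (le_max_right j k) hy)⟩⟩
  isOpen_sUnion := by
    intro S hS a ha
    obtain ⟨O, hO, haO⟩ := ha
    obtain ⟨j, hj⟩ := hS O hO a haO
    exact ⟨j, fun y hy => ⟨O, hO, hj hy⟩⟩

attribute [local instance] tY

lemma isOpen_iff_Y {O : Set (Yt u)} :
    IsOpen O ↔ ∀ a : ↥A, Yinl u a ∈ O → ∃ j, Vset u a j ⊆ O := Iff.rfl

lemma inl_mem_Vset (a : ↥A) (j : ℕ) : Yinl u a ∈ Vset u a j := Or.inl rfl

lemma inl_mem_Vset_iff {a b : ↥A} {j : ℕ} : Yinl u b ∈ Vset u a j ↔ b = a := by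
  constructor
  · rintro (h | ⟨e, he, -⟩)
    · exact Yinl_injective u h
    · exact absurd he (Yinl_ne_Yinr u b e)
  · rintro rfl; exact inl_mem_Vset u _ j

lemma inr_mem_Vset_iff {a : ↥A} {e : ↥(Epts u)} {j : ℕ} :
    Yinr u e ∈ Vset u a j ↔
      ((e.val.1 = a ∧ j ≤ e.val.2.2.1) ∨ (e.val.2.1 = a ∧ j ≤ e.val.2.2.2)) := by
  constructor
  · rintro (h | ⟨e', he', hc⟩)
    · exact absurd h.symm (Yinl_ne_Yinr u a e)
    · obtain rfl : e' = e := Yinr_injective u he'.symm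
      exact hc
  · intro h; exact Or.inr ⟨e, rfl, h⟩

lemma isOpen_Vset (a : ↥A) (j : ℕ) : IsOpen (Vset u a j) := by
  intro b hb
  obtain rfl : b = a := (inl_mem_Vset_iff u).mp hb
  exact ⟨j, le_refl _⟩

lemma isOpen_singleton_inr (e : ↥(Epts u)) : IsOpen ({Yinr u e} : Set (Yt u)) := by
  intro a ha
  exact absurd ha (Yinl_ne_Yinr u a e)

lemma mem_nhds_inl {O : Set (Yt u)} {a : ↥A} :
    O ∈ nhds (Yinl u a) ↔ ∃ j, Vset u a j ⊆ O := by
  constructor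
  · intro h
    obtain ⟨P, hPO, hP, haP⟩ := mem_nhds_iff.mp h
    obtain ⟨j, hj⟩ := hP a haP
    exact ⟨j, hj.trans hPO⟩
  · rintro ⟨j, hj⟩
    exact mem_nhds_iff.mpr ⟨Vset u a j, hj, isOpen_Vset u a j, inl_mem_Vset u a j⟩

lemma firstCountable_Y : FirstCountableTopology (Yt u) := by
  constructor
  intro y
  rcases Yt_cases u y with ⟨a, rfl⟩ | ⟨e, rfl⟩
  · have hb : (nhds (Yinl u a)).HasBasis (fun _ : ℕ => True) (Vset u a) := by
      apply Filter.hasBasis_iff.mpr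
      intro t
      rw [mem_nhds_inl]
      simp
    exact hb.isCountablyGenerated
  · rw [(isOpen_singleton_iff_nhds_eq_pure _).mp (isOpen_singleton_inr u e),
      ← Filter.principal_singleton]
    exact Filter.isCountablyGenerated_principal _

end Statement2Y

section Statement2Main

open Filter

variable {X : Type} [tX : TopologicalSpace X] {A : Set X} (u : ↥A → ℕ → Set X)

attribute [local instance] tY

lemma Hset_down (hu : NicePack A u) {a b : ↥A} {p q : ℕ × ℕ} (hp : p ∈ Hset u a b)
    (h1 : q.1 ≤ p.1) (h2 : q.2 ≤ p.2) : q ∈ Hset u a b :=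
  Set.Nonempty.mono (Set.inter_subset_inter (hu.anti a q.1 p.1 h1) (hu.anti b q.2 p.2 h2)) hp

lemma Hset_swap {a b : ↥A} {p : ℕ × ℕ} : p ∈ Hset u a b ↔ (p.2, p.1) ∈ Hset u b a :=
  ⟨fun ⟨z, h1, h2⟩ => ⟨z, h2, h1⟩, fun ⟨z, h1, h2⟩ => ⟨z, h2, h1⟩⟩

lemma Hset_col_finite (hu : NicePack A u) {a b : ↥A} (hab : b ≠ a) (n : ℕ) :
    {m | (n, m) ∈ Hset u a b}.Finite := by
  by_contra hinf
  refine hu.notMemCl a b hab n ?_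
  rw [mem_closure_iff]
  intro O hO hbO
  obtain ⟨m, hm⟩ := hu.base b O hO hbO
  obtain ⟨m', hm'S, hmm'⟩ : ∃ m', m' ∈ {m | (n, m) ∈ Hset u a b} ∧ m ≤ m' := by
    by_contra hcon
    push_neg at hcon
    exact hinf (Set.Finite.subset (Set.finite_Iio m) fun x hx => hcon x hx)
  obtain ⟨z, hz1, hz2⟩ := hm'S
  exact ⟨z, hm (hu.anti b m m' hmm' hz2), hz1⟩

lemma Hset_finite (hu : NicePack A u) {a b : ↥A} (hab : a ≠ b) : (Hset u a b).Finite := by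
  have hrow : {n | (n, 0) ∈ Hset u a b}.Finite := by
    have h0 := Hset_col_finite u hu hab 0
    have heq : {n | (n, 0) ∈ Hset u a b} = {m | (0, m) ∈ Hset u b a} := by
      ext n
      exact Hset_swap u
    rw [heq]
    exact h0
  have hcol : {m | (0, m) ∈ Hset u a b}.Finite := Hset_col_finite u hu (Ne.symm hab) 0
  apply (hrow.prod hcol).subset
  intro p hp
  exact ⟨Hset_down u hu hp le_rfl (Nat.zero_le _), Hset_down u hu hp (Nat.zero_le _) le_rfl⟩

lemma Hset_bound (hu : NicePack A u) {a b : ↥A} (hab : a ≠ b) :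
    ∃ k, ∀ p ∈ Hset u a b, p.1 < k ∧ p.2 < k := by
  obtain ⟨k, hk⟩ := ((Hset_finite u hu hab).image fun p => max p.1 p.2).bddAbove
  refine ⟨k + 1, fun p hp => ?_⟩
  have h := hk (Set.mem_image_of_mem _ hp)
  exact ⟨Nat.lt_succ_of_le ((le_max_left _ _).trans h),
    Nat.lt_succ_of_le ((le_max_right _ _).trans h)⟩

lemma Vset_inter (hu : NicePack A u) {a b : ↥A} (hab : a ≠ b) {j k : ℕ} :
    (Vset u a j ∩ Vset u b k).Nonempty ↔ (j, k) ∈ Hset u a b := by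
  constructor
  · rintro ⟨y, hy1, hy2⟩
    rcases Yt_cases u y with ⟨c, rfl⟩ | ⟨e, rfl⟩
    · obtain rfl : c = a := (inl_mem_Vset_iff u).mp hy1
      exact absurd ((inl_mem_Vset_iff u).mp hy2) hab
    · rw [inr_mem_Vset_iff] at hy1 hy2
      obtain ⟨hne, hH⟩ := e.2
      rcases hy1 with ⟨h1, hj⟩ | ⟨h1, hj⟩ <;> rcases hy2 with ⟨h2, hk⟩ | ⟨h2, hk⟩
      · exact absurd (h1.symm.trans h2) hab
      · rw [h1, h2] at hH
        exact Hset_down u hu hH hj hk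
      · rw [h1, h2] at hH
        exact (Hset_swap u).mpr (Hset_down u hu hH hk hj)
      · exact absurd (h1.symm.trans h2) hab
  · intro h
    refine ⟨Yinr u ⟨(a, b, j, k), ⟨hab, h⟩⟩, ?_, ?_⟩
    · rw [inr_mem_Vset_iff]
      exact Or.inl ⟨rfl, le_refl j⟩
    · rw [inr_mem_Vset_iff]
      exact Or.inr ⟨rfl, le_refl k⟩

lemma isClosed_Vset (hu : NicePack A u) (a : ↥A) (j : ℕ) : IsClosed (Vset u a j) := by
  rw [← isOpen_compl_iff]
  intro b hb
  have hba : b ≠ a := by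
    rintro rfl
    exact hb (inl_mem_Vset u b j)
  obtain ⟨k, hk⟩ := Hset_bound u hu hba
  refine ⟨k, fun y hy hyV => ?_⟩
  have hne : (Vset u b k ∩ Vset u a j).Nonempty := ⟨y, hy, hyV⟩
  rw [Vset_inter u hu hba] at hne
  exact absurd (hk _ hne).1 (lt_irrefl k)

lemma zeroDim_Y (hu : NicePack A u) : ZeroDimensional (Yt u) := by
  refine ⟨(Set.range fun p : ↥A × ℕ => Vset u p.1 p.2) ∪
    (Set.range fun e : ↥(Epts u) => ({Yinr u e} : Set (Yt u))), ?_, ?_⟩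
  · apply TopologicalSpace.isTopologicalBasis_of_isOpen_of_nhds
    · rintro U (⟨p, rfl⟩ | ⟨e, rfl⟩)
      · exact isOpen_Vset u p.1 p.2
      · exact isOpen_singleton_inr u e
    · intro y O hyO hO
      rcases Yt_cases u y with ⟨a, rfl⟩ | ⟨e, rfl⟩
      · obtain ⟨j, hj⟩ := hO a hyO
        exact ⟨Vset u a j, Or.inl ⟨(a, j), rfl⟩, inl_mem_Vset u a j, hj⟩
      · exact ⟨{Yinr u e}, Or.inr ⟨e, rfl⟩, rfl, fun z hz => by
          have : z = Yinr u e := hz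
          rw [this]; exact hyO⟩
  · rintro U (⟨p, rfl⟩ | ⟨e, rfl⟩)
    · exact ⟨isClosed_Vset u hu p.1 p.2, isOpen_Vset u p.1 p.2⟩
    · refine ⟨?_, isOpen_singleton_inr u e⟩
      rw [← isOpen_compl_iff]
      intro b hb
      refine ⟨e.val.2.2.1 + e.val.2.2.2 + 1, fun y hy hye => ?_⟩
      have hy' : y = Yinr u e := hye
      subst hy'
      rw [inr_mem_Vset_iff] at hy
      rcases hy with ⟨-, h⟩ | ⟨-, h⟩ <;> omega

lemma cwh_Y {κ : Cardinal} (hcwh : CwHLt X κ) (hD : IsClosedDiscreteSet A)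
    (hu : NicePack A u) : CwHLt (Yt u) κ := by
  classical
  intro D hDcd hDcard
  set S : Set X := {x | ∃ h : x ∈ A, Yinl u ⟨x, h⟩ ∈ D} with hSdef
  have hSA : S ⊆ A := fun x hx => hx.choose
  have hScd := isCD_subset hD hSA
  have hScard : #S < κ := by
    refine lt_of_le_of_lt (Cardinal.mk_le_of_injective
      (f := fun x : ↥S => (⟨Yinl u ⟨x.1, x.2.choose⟩, x.2.choose_spec⟩ : ↥D)) ?_) hDcard
    intro x y hxy
    exact Subtype.ext (Subtype.mk_eq_mk.mp (Yinl_injective u (congrArg Subtype.val hxy)))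
  obtain ⟨G, hG1, hG2, hG3⟩ := hcwh S hScd hScard
  have key : ∀ a : ↥A, Yinl u a ∈ D →
      ∃ j, u a j ⊆ G (a : X) ∧ ∀ y ∈ Vset u a j, y ∈ D → y = Yinl u a := by
    intro a ha
    have haS : (a : X) ∈ S := ⟨a.2, ha⟩
    obtain ⟨j1, hj1⟩ := hu.base a _ (hG1 _ haS) (hG2 _ haS)
    obtain ⟨O, hO, hOD⟩ := (isCD_iff.mp hDcd).2 _ ha
    have haO : Yinl u a ∈ O := by
      have : Yinl u a ∈ O ∩ D := by rw [hOD]; rfl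
      exact this.1
    obtain ⟨j2, hj2⟩ := hO a haO
    refine ⟨max j1 j2, (hu.anti a j1 _ (le_max_left _ _)).trans hj1, ?_⟩
    intro y hy hyD
    have hmem : y ∈ O ∩ D := ⟨hj2 (Vset_anti u a (le_max_right j1 j2) hy), hyD⟩
    rw [hOD] at hmem
    exact hmem
  choose! jf hjf1 hjf2 using key
  refine ⟨fun y => if h : ∃ a : ↥A, y = Yinl u a then Vset u h.choose (jf h.choose)
    else {y}, ?_, ?_, ?_⟩
  · intro y hyD
    beta_reduce
    by_cases h : ∃ a : ↥A, y = Yinl u a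
    · rw [dif_pos h]
      exact isOpen_Vset u _ _
    · rw [dif_neg h]
      rcases Yt_cases u y with ⟨a, rfl⟩ | ⟨e, rfl⟩
      · exact absurd ⟨a, rfl⟩ h
      · exact isOpen_singleton_inr u e
  · intro y hyD
    beta_reduce
    by_cases h : ∃ a : ↥A, y = Yinl u a
    · rw [dif_pos h]
      have hm := inl_mem_Vset u h.choose (jf h.choose)
      rwa [← h.choose_spec] at hm
    · rw [dif_neg h]
      rfl
  · intro y hyD z hzD hne
    beta_reduce
    by_cases hy' : ∃ a : ↥A, y = Yinl u a <;> by_cases hz' : ∃ a : ↥A, z = Yinl u a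
    · rw [dif_pos hy', dif_pos hz']
      set a := hy'.choose with ha
      set b := hz'.choose with hb
      have hya : y = Yinl u a := hy'.choose_spec
      have hzb : z = Yinl u b := hz'.choose_spec
      have hab : a ≠ b := by
        intro hab'
        exact hne (by rw [hya, hzb, hab'])
      by_contra hcon
      obtain ⟨w, hw⟩ := Set.not_disjoint_iff_nonempty_inter.mp hcon
      have hH : ((jf a, jf b)) ∈ Hset u a b := (Vset_inter u hu hab).mp ⟨w, hw⟩
      obtain ⟨w0, hw01, hw02⟩ := hH
      have haD : Yinl u a ∈ D := hya ▸ hyD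
      have hbD : Yinl u b ∈ D := hzb ▸ hzD
      have haS : (a : X) ∈ S := ⟨a.2, haD⟩
      have hbS : (b : X) ∈ S := ⟨b.2, hbD⟩
      have hvne : (a : X) ≠ (b : X) := fun h => hab (Subtype.ext h)
      exact Set.disjoint_left.mp (hG3 _ haS _ hbS hvne) (hjf1 a haD hw01) (hjf1 b hbD hw02)
    · rw [dif_pos hy', dif_neg hz']
      set a := hy'.choose with ha
      have hya : y = Yinl u a := hy'.choose_spec
      have haD : Yinl u a ∈ D := hya ▸ hyD
      refine Set.disjoint_singleton_right.mpr ?_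
      intro hmem
      exact hz' ⟨a, hjf2 a haD z hmem hzD⟩
    · rw [dif_neg hy', dif_pos hz']
      set b := hz'.choose with hb
      have hzb : z = Yinl u b := hz'.choose_spec
      have hbD : Yinl u b ∈ D := hzb ▸ hzD
      refine Set.disjoint_singleton_left.mpr ?_
      intro hmem
      exact hy' ⟨b, hjf2 b hbD y hmem hyD⟩
    · rw [dif_neg hy', dif_neg hz']
      exact Set.disjoint_singleton.mpr hne

lemma notweak_Y {θ : Cardinal} (hA : IsClosedDiscreteSet A) (hAcard : #A = θ)
    (hAnosep : ∀ B ⊆ A, #B = θ → ¬ IsSeparatedSet B) (hu : NicePack A u) :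
    ¬ WeaklyCwH (Yt u) θ := by
  classical
  intro hw
  have hcd : IsClosedDiscreteSet (Set.range (Yinl u)) := by
    rw [isCD_iff]
    constructor
    · rw [← isOpen_compl_iff]
      intro a ha
      exact absurd ⟨a, rfl⟩ ha
    · rintro y ⟨a, rfl⟩
      refine ⟨Vset u a 0, isOpen_Vset u a 0, ?_⟩
      ext z
      constructor
      · rintro ⟨hz1, b, rfl⟩
        have : b = a := (inl_mem_Vset_iff u).mp hz1
        rw [this]
        rfl
      · intro hz
        have hz' : z = Yinl u a := hz
        subst hz'
        exact ⟨inl_mem_Vset u a 0, ⟨a, rfl⟩⟩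
  have hcard : #(Set.range (Yinl u)) = θ := by
    rw [Cardinal.mk_range_eq _ (Yinl_injective u)]
    exact hAcard
  obtain ⟨Bh, hBsub, hBcard, hBsep⟩ := hw _ hcd hcard
  set B : Set X := {x | ∃ h : x ∈ A, Yinl u ⟨x, h⟩ ∈ Bh} with hBdef
  have hBA : B ⊆ A := fun x hx => hx.choose
  have hBcard2 : #B = θ := by
    rw [← hBcard]
    apply Cardinal.mk_congr
    refine Equiv.ofBijective
      (fun x : ↥B => (⟨Yinl u ⟨x.1, x.2.choose⟩, x.2.choose_spec⟩ : ↥Bh)) ⟨?_, ?_⟩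
    · intro x y hxy
      exact Subtype.ext (Subtype.mk_eq_mk.mp (Yinl_injective u (congrArg Subtype.val hxy)))
    · rintro ⟨y, hy⟩
      obtain ⟨a, rfl⟩ := hBsub hy
      exact ⟨⟨a.1, a.2, hy⟩, Subtype.ext rfl⟩
  obtain ⟨Us, hUo, hUm, hUd⟩ := hBsep
  have key : ∀ a : ↥A, Yinl u a ∈ Bh → ∃ j, Vset u a j ⊆ Us (Yinl u a) := fun a ha =>
    (hUo _ ha) a (hUm _ ha)
  choose! jf hjf using key
  apply hAnosep B hBA hBcard2
  refine ⟨fun x => if h : ∃ hx : x ∈ A, Yinl u ⟨x, hx⟩ ∈ Bh then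
    u ⟨x, h.choose⟩ (jf ⟨x, h.choose⟩) else Set.univ, ?_, ?_, ?_⟩
  · intro x hx
    have hx' : ∃ hxA : x ∈ A, Yinl u ⟨x, hxA⟩ ∈ Bh := hx
    beta_reduce
    rw [dif_pos hx']
    exact hu.opn _ _
  · intro x hx
    have hx' : ∃ hxA : x ∈ A, Yinl u ⟨x, hxA⟩ ∈ Bh := hx
    beta_reduce
    rw [dif_pos hx']
    exact hu.mem _ _
  · intro x hx y hy hne
    have hx' : ∃ hxA : x ∈ A, Yinl u ⟨x, hxA⟩ ∈ Bh := hx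
    have hy' : ∃ hyA : y ∈ A, Yinl u ⟨y, hyA⟩ ∈ Bh := hy
    beta_reduce
    rw [dif_pos hx', dif_pos hy']
    set a : ↥A := ⟨x, hx'.choose⟩ with ha
    set b : ↥A := ⟨y, hy'.choose⟩ with hb
    have hab : a ≠ b := fun h => hne (congrArg Subtype.val h)
    by_contra hcon
    obtain ⟨w, hw⟩ := Set.not_disjoint_iff_nonempty_inter.mp hcon
    have hH : ((jf a, jf b)) ∈ Hset u a b := ⟨w, hw⟩
    obtain ⟨y0, hy0a, hy0b⟩ := (Vset_inter u hu hab).mpr hH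
    have h1 : y0 ∈ Us (Yinl u a) := hjf a hx'.choose_spec hy0a
    have h2 : y0 ∈ Us (Yinl u b) := hjf b hy'.choose_spec hy0b
    have hd := hUd _ hx'.choose_spec _ hy'.choose_spec
      (fun h => hab (Yinl_injective u h))
    exact Set.disjoint_left.mp hd h1 h2

end Statement2Main

lemma statement2_forward {κ θ : Cardinal} (hκ : ℵ₀ < κ)
    (h : ∃ (X : Type) (t : TopologicalSpace X),
      @FirstCountableTopology X t ∧ @CwHLt X t κ ∧ ¬ @WeaklyCwH X t θ) :
    ∃ (X : Type) (t : TopologicalSpace X),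
      @FirstCountableTopology X t ∧ @ZeroDimensional X t ∧
        @CwHLt X t κ ∧ ¬ @WeaklyCwH X t θ := by
  obtain ⟨X, t, hfc, hcwh, hnw⟩ := h
  letI := t
  haveI := hfc
  simp only [WeaklyCwH, not_forall] at hnw
  obtain ⟨A, hAcd, hAcard, hAnosep⟩ := hnw
  push_neg at hAnosep
  obtain ⟨u, hu⟩ := exists_nicePack hκ hcwh hAcd
  exact ⟨Yt u, tY u, firstCountable_Y u, zeroDim_Y u hu, cwh_Y u hcwh hAcd hu,
    notweak_Y u hAcd hAcard hAnosep hu⟩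


/-- There is a first countable, `<κ`-cwH, not weakly `θ`-cwH space iff
there is a first countable, zero-dimensional such space. -/
theorem statement2 (κ θ : Cardinal) (hκ : ℵ₀ < κ) (hθ : ℵ₀ < θ) (hκθ : κ ≤ θ) :
    (∃ (X : Type) (t : TopologicalSpace X),
      @FirstCountableTopology X t ∧ @CwHLt X t κ ∧ ¬ @WeaklyCwH X t θ) ↔
    (∃ (X : Type) (t : TopologicalSpace X),
      @FirstCountableTopology X t ∧ @ZeroDimensional X t ∧
        @CwHLt X t κ ∧ ¬ @WeaklyCwH X t θ) := by
  constructor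
  · exact statement2_forward hκ
  · rintro ⟨X, t, h1, h2, h3, h4⟩
    exact ⟨X, t, h1, h3, h4⟩
end

section
/- Let θ be an uncountable cardinal. There exists a θ-good subset of F_{θ,ω} × F_{θ,ω} if and only if there exists a first countable topological space that is <θ-collectionwise Hausdorff but not ≤θ-collectionwise Hausdorff. -/
open Cardinal Set TopologicalSpace

/-! ### Auxiliary development for statement3 -/

noncomputable section Aux3

open Filter

section FanAux

variable {ι : Type}

attribute [local instance] fanTopology

/-- The basic neighborhood `B_f` of the fan point `*`. -/
def Bf (f : ι → ℕ) : Set (Option (ι × ℕ)) := {x | ∀ p : ι × ℕ, x = some p → f p.1 ≤ p.2}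

lemma none_mem_Bf (f : ι → ℕ) : (none : Option (ι × ℕ)) ∈ Bf f := fun _ h => by cases h

lemma some_mem_Bf {f : ι → ℕ} {p : ι × ℕ} : some p ∈ Bf f ↔ f p.1 ≤ p.2 :=
  ⟨fun h => h p rfl, fun h q hq => by cases hq; exact h⟩

lemma fan_isOpen_iff {U : Set (Option (ι × ℕ))} :
    IsOpen U ↔ (none ∈ U → ∃ f : ι → ℕ, ∀ p : ι × ℕ, f p.1 ≤ p.2 → some p ∈ U) :=
  Iff.rfl

lemma isOpen_Bf (f : ι → ℕ) : IsOpen (Bf f) :=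
  fan_isOpen_iff.2 fun _ => ⟨f, fun p hp => some_mem_Bf.2 hp⟩

lemma mem_of_mem_Bf {f : ι → ℕ} {U : Set (Option (ι × ℕ))} (hU : IsOpen U) (hn : none ∈ U)
    (hf : ∀ p : ι × ℕ, f p.1 ≤ p.2 → some p ∈ U) {x : Option (ι × ℕ)} (hx : x ∈ Bf f) :
    x ∈ U := by
  match x with
  | none => exact hn
  | some p => exact hf p (some_mem_Bf.1 hx)

lemma fanSq_eq : fanSqTopology ι = (instTopologicalSpaceProd :
    TopologicalSpace (Option (ι × ℕ) × Option (ι × ℕ))) := rfl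

/-- Characterization of membership of `(*,*)` in the closure of a subset of the
square of the fan. -/
lemma fan_closure_none {S : Set (Option (ι × ℕ) × Option (ι × ℕ))} :
    (none, none) ∈ @closure _ (fanSqTopology ι) S ↔
      ∀ f g : ι → ℕ, ∃ p ∈ S, p.1 ∈ Bf f ∧ p.2 ∈ Bf g := by
  rw [fanSq_eq, mem_closure_iff]
  constructor
  · intro h f g
    obtain ⟨p, hpO, hpS⟩ := h (Bf f ×ˢ Bf g) ((isOpen_Bf f).prod (isOpen_Bf g))
      ⟨none_mem_Bf f, none_mem_Bf g⟩
    exact ⟨p, hpS, hpO.1, hpO.2⟩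
  · intro h O hO hmem
    obtain ⟨u, v, hu, hv, hnu, hnv, huv⟩ := isOpen_prod_iff.1 hO none none hmem
    obtain ⟨f, hf⟩ := hu hnu
    obtain ⟨g, hg⟩ := hv hnv
    obtain ⟨p, hpS, hp1, hp2⟩ := h f g
    exact ⟨p, huv ⟨mem_of_mem_Bf hu hnu hf hp1, mem_of_mem_Bf hv hnv hg hp2⟩, hpS⟩

end FanAux

section CD

variable {X : Type*} [TopologicalSpace X]

lemma discrete_of_sep (D : Set X) (h : ∀ x ∈ D, ∃ U, IsOpen U ∧ U ∩ D = {x}) :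
    DiscreteTopology D := by
  rw [discreteTopology_iff_isOpen_singleton]
  rintro ⟨x, hx⟩
  obtain ⟨U, hU, hUD⟩ := h x hx
  refine isOpen_induced_iff.2 ⟨U, hU, ?_⟩
  ext ⟨y, hy⟩
  simp only [Set.mem_preimage, Set.mem_singleton_iff, Subtype.mk.injEq]
  constructor
  · intro hyU
    have : y ∈ U ∩ D := ⟨hyU, hy⟩
    rw [hUD] at this; exact this
  · intro hyx
    show y ∈ U
    rw [hyx]
    exact (show x ∈ U ∩ D by rw [hUD]; rfl).1

lemma sep_of_discrete {D : Set X} (h : DiscreteTopology D) :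
    ∀ x ∈ D, ∃ U, IsOpen U ∧ U ∩ D = {x} := by
  intro x hx
  have : IsOpen ({⟨x, hx⟩} : Set D) := isOpen_discrete _
  obtain ⟨U, hU, hUeq⟩ := isOpen_induced_iff.1 this
  refine ⟨U, hU, ?_⟩
  ext y
  simp only [Set.mem_inter_iff, Set.mem_singleton_iff]
  constructor
  · rintro ⟨hyU, hyD⟩
    have : (⟨y, hyD⟩ : D) ∈ ({⟨x, hx⟩} : Set D) := by rw [← hUeq]; exact hyU
    exact congrArg Subtype.val this
  · intro hyx
    have hxU : (⟨x, hx⟩ : D) ∈ Subtype.val ⁻¹' U := by rw [hUeq]; rfl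
    exact ⟨by rw [hyx]; exact hxU, by rw [hyx]; exact hx⟩

lemma closedDiscrete_mono {D C : Set X} (hD : IsClosedDiscreteSet D) (hCD : C ⊆ D) :
    IsClosedDiscreteSet C := by
  obtain ⟨hDc, hDd⟩ := hD
  have key : ∀ x ∈ D, ∃ U, IsOpen U ∧ U ∩ D = {x} := sep_of_discrete hDd
  constructor
  · rw [← closure_subset_iff_isClosed]
    intro x hx
    have hxD : x ∈ D := by
      rw [← hDc.closure_eq]; exact closure_mono hCD hx
    obtain ⟨U, hU, hUD⟩ := key x hxD
    obtain ⟨y, hyU, hyC⟩ := mem_closure_iff.1 hx U hU (by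
      have : x ∈ U ∩ D := hUD ▸ rfl; exact this.1)
    have : y ∈ U ∩ D := ⟨hyU, hCD hyC⟩
    rw [hUD] at this
    rwa [← this]
  · refine discrete_of_sep C fun x hx => ?_
    obtain ⟨U, hU, hUD⟩ := key x (hCD hx)
    refine ⟨U, hU, ?_⟩
    apply Set.Subset.antisymm
    · intro y hy
      have : y ∈ U ∩ D := ⟨hy.1, hCD hy.2⟩
      rw [hUD] at this; exact this
    · rintro y rfl
      exact ⟨by have : y ∈ U ∩ D := hUD ▸ rfl; exact this.1, hx⟩

end CD

section BadPart

variable {ι : Type}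

/-- The part of a good set having a `none` coordinate does not cluster at `(*,*)`. -/
lemma not_closure_bad {θ : Cardinal} (hθ : ℵ₀ < θ)
    {S : Set (Option (ι × ℕ) × Option (ι × ℕ))} (hgood : IsThetaGood θ S) :
    (none, none) ∉ @closure _ (fanSqTopology ι) {p ∈ S | p.1 = none ∨ p.2 = none} := by
  have hnm : (none, none) ∉ S := by
    intro hmem
    refine hgood.2 {((none : Option (ι × ℕ)), (none : Option (ι × ℕ)))}
      (Set.singleton_subset_iff.2 hmem) ?_ ?_
    · rw [Cardinal.mk_singleton]
      exact lt_trans Cardinal.one_lt_aleph0 hθ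
    · rw [fan_closure_none]
      intro f g
      exact ⟨(none, none), rfl, none_mem_Bf f, none_mem_Bf g⟩
  -- columns of the two degenerate parts
  set P : Set (ι × ℕ) := {q | ((none : Option (ι × ℕ)), some q) ∈ S} with hP
  set Q : Set (ι × ℕ) := {q | (some q, (none : Option (ι × ℕ))) ∈ S} with hQ
  by_cases hPinf : ∃ α : ι, {n | (α, n) ∈ P}.Infinite
  · obtain ⟨α, hα⟩ := hPinf
    exfalso
    refine hgood.2 {p | ∃ n, (α, n) ∈ P ∧ p = ((none : Option (ι × ℕ)), some (α, n))}
      ?_ ?_ ?_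
    · rintro p ⟨n, hn, rfl⟩; exact hn
    · calc #{p | ∃ n, (α, n) ∈ P ∧ p = ((none : Option (ι × ℕ)), some (α, n))}
          ≤ #ℕ := by
            refine Cardinal.mk_le_of_injective (f := fun x =>
              Classical.choose x.2) ?_
            rintro ⟨p, hp⟩ ⟨p', hp'⟩ h
            have e1 := (Classical.choose_spec hp).2
            have e2 := (Classical.choose_spec hp').2
            simp only at h
            rw [h] at e1
            exact Subtype.ext (e1.trans e2.symm)
        _ = ℵ₀ := Cardinal.mk_nat
        _ < θ := hθ
    · rw [fan_closure_none]
      intro f g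
      obtain ⟨n, hn⟩ := (hα.diff (Set.finite_Iio (g α))).nonempty
      have hnP : (α, n) ∈ P := hn.1
      have hng : g α ≤ n := not_lt.1 hn.2
      exact ⟨((none : Option (ι × ℕ)), some (α, n)), ⟨n, hnP, rfl⟩, none_mem_Bf f,
        some_mem_Bf.2 hng⟩
  · by_cases hQinf : ∃ α : ι, {n | (α, n) ∈ Q}.Infinite
    · obtain ⟨α, hα⟩ := hQinf
      exfalso
      refine hgood.2 {p | ∃ n, (α, n) ∈ Q ∧ p = (some (α, n), (none : Option (ι × ℕ)))}
        ?_ ?_ ?_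
      · rintro p ⟨n, hn, rfl⟩; exact hn
      · calc #{p | ∃ n, (α, n) ∈ Q ∧ p = (some (α, n), (none : Option (ι × ℕ)))}
            ≤ #ℕ := by
              refine Cardinal.mk_le_of_injective (f := fun x =>
                Classical.choose x.2) ?_
              rintro ⟨p, hp⟩ ⟨p', hp'⟩ h
              have e1 := (Classical.choose_spec hp).2
              have e2 := (Classical.choose_spec hp').2
              simp only at h
              rw [h] at e1
              exact Subtype.ext (e1.trans e2.symm)
          _ = ℵ₀ := Cardinal.mk_nat
          _ < θ := hθ
      · rw [fan_closure_none]
        intro f g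
        obtain ⟨n, hn⟩ := (hα.diff (Set.finite_Iio (f α))).nonempty
        have hnQ : (α, n) ∈ Q := hn.1
        have hnf : f α ≤ n := not_lt.1 hn.2
        exact ⟨(some (α, n), (none : Option (ι × ℕ))), ⟨n, hnQ, rfl⟩,
          some_mem_Bf.2 hnf, none_mem_Bf g⟩
    · -- all columns finite: build a neighborhood missing the bad part
      push_neg at hPinf hQinf
      have hg : ∀ α : ι, ∃ k : ℕ, ∀ n, (α, n) ∈ P → n < k := by
        intro α
        obtain ⟨k, hk⟩ := (hPinf α).bddAbove
        exact ⟨k + 1, fun n hn => Nat.lt_succ_of_le (hk hn)⟩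
      have hf : ∀ α : ι, ∃ k : ℕ, ∀ n, (α, n) ∈ Q → n < k := by
        intro α
        obtain ⟨k, hk⟩ := (hQinf α).bddAbove
        exact ⟨k + 1, fun n hn => Nat.lt_succ_of_le (hk hn)⟩
      choose g hgs using hg
      choose f hfs using hf
      rw [fan_closure_none]
      push_neg
      refine ⟨f, g, ?_⟩
      rintro p ⟨hpS, hbad⟩ h1
      rcases hbad with h | h
      · match p, h with
        | (none, none), _ => exact absurd hpS hnm
        | (none, some q), _ =>
          intro h2
          exact absurd (some_mem_Bf.1 h2) (not_le.2 (hgs q.1 q.2 hpS))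
      · match p, h with
        | (none, none), _ => exact absurd hpS hnm
        | (some q, none), _ =>
          exact absurd (some_mem_Bf.1 h1) (not_le.2 (hfs q.1 q.2 hpS))

end BadPart

section GSpace

/-- Pick the `b`-th coordinate of a pair. -/
def pick {ι : Type} (b : Bool) (p : (ι × ℕ) × (ι × ℕ)) : ι × ℕ :=
  match b with
  | false => p.1
  | true => p.2

/-- The space built from (the nondegenerate part of) a good set. -/
def GS (ι : Type) (S' : Set ((ι × ℕ) × (ι × ℕ))) : Type := (ι × Bool) ⊕ S'

/-- The topology on `GS`. -/
def gsTop (ι : Type) (S' : Set ((ι × ℕ) × (ι × ℕ))) : TopologicalSpace (GS ι S') where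
  IsOpen U := ∀ a : ι × Bool, Sum.inl a ∈ U →
    ∃ k : ℕ, ∀ s : S', (pick a.2 s.val).1 = a.1 → k ≤ (pick a.2 s.val).2 → Sum.inr s ∈ U
  isOpen_univ := fun _ _ => ⟨0, fun _ _ _ => trivial⟩
  isOpen_inter := by
    intro U V hU hV a ha
    obtain ⟨k, hk⟩ := hU a ha.1
    obtain ⟨l, hl⟩ := hV a ha.2
    exact ⟨max k l, fun s h1 h2 =>
      ⟨hk s h1 (le_trans (le_max_left _ _) h2), hl s h1 (le_trans (le_max_right _ _) h2)⟩⟩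
  isOpen_sUnion := by
    intro 𝒮 h𝒮 a ha
    obtain ⟨U, hU, haU⟩ := ha
    obtain ⟨k, hk⟩ := h𝒮 U hU a haU
    exact ⟨k, fun s h1 h2 => ⟨U, hU, hk s h1 h2⟩⟩

variable {ι : Type} {S' : Set ((ι × ℕ) × (ι × ℕ))}

attribute [local instance] gsTop

lemma gs_isOpen_iff {U : Set (GS ι S')} :
    IsOpen U ↔ ∀ a : ι × Bool, Sum.inl a ∈ U →
      ∃ k : ℕ, ∀ s : S', (pick a.2 s.val).1 = a.1 → k ≤ (pick a.2 s.val).2 → Sum.inr s ∈ U :=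
  Iff.rfl

/-- Basic neighborhoods of the points `inl (α, b)`. -/
def Nb (α : ι) (b : Bool) (k : ℕ) : Set (GS ι S') :=
  {x | x = Sum.inl (α, b) ∨
    ∃ s : S', x = Sum.inr s ∧ (pick b s.val).1 = α ∧ k ≤ (pick b s.val).2}

lemma isOpen_Nb (α : ι) (b : Bool) (k : ℕ) : IsOpen (Nb (S' := S') α b k) := by
  rw [gs_isOpen_iff]
  rintro a (ha | ⟨s, hs, -⟩)
  · cases ha
    exact ⟨k, fun s h1 h2 => Or.inr ⟨s, rfl, h1, h2⟩⟩
  · cases hs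

lemma isOpen_singleton_inr_s3 (s : S') : IsOpen ({Sum.inr s} : Set (GS ι S')) := by
  rw [gs_isOpen_iff]
  rintro a ha
  cases ha

lemma gs_inl_inj {a a' : ι × Bool} (h : (Sum.inl a : GS ι S') = Sum.inl a') : a = a' :=
  Sum.inl_injective h

lemma nhds_inl_basis (α : ι) (b : Bool) :
    (@nhds (GS ι S') _ (Sum.inl (α, b))).HasAntitoneBasis (fun k => Nb α b k) := by
  constructor
  · constructor
    intro t
    constructor
    · intro ht
      obtain ⟨U, hUt, hU, hmemU⟩ := mem_nhds_iff.1 ht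
      obtain ⟨k, hk⟩ := gs_isOpen_iff.1 hU (α, b) hmemU
      refine ⟨k, trivial, fun x hx => ?_⟩
      rcases hx with rfl | ⟨s, rfl, h1, h2⟩
      · exact hUt hmemU
      · exact hUt (hk s h1 h2)
    · rintro ⟨k, -, hsub⟩
      exact mem_nhds_iff.2 ⟨Nb α b k, hsub, isOpen_Nb α b k, Or.inl rfl⟩
  · intro k l hkl x hx
    rcases hx with rfl | ⟨s, rfl, h1, h2⟩
    · exact Or.inl rfl
    · exact Or.inr ⟨s, rfl, h1, le_trans hkl h2⟩

lemma gs_nhds_inr (s : S') :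
    @nhds (GS ι S') _ (Sum.inr s) = Filter.principal {Sum.inr s} := by
  apply le_antisymm
  · exact Filter.le_principal_iff.2 ((isOpen_singleton_inr_s3 s).mem_nhds rfl)
  · rw [Filter.principal_singleton]
    exact @pure_le_nhds (GS ι S') _ _

lemma gs_firstCountable : @FirstCountableTopology (GS ι S') (gsTop ι S') := by
  constructor
  intro x
  match x with
  | Sum.inl (α, b) => exact (nhds_inl_basis α b).toHasBasis.isCountablyGenerated
  | Sum.inr s => rw [gs_nhds_inr s]; exact Filter.isCountablyGenerated_principal _

/-- The copy of `ι × Bool` inside `GS`. -/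
def Aset (ι : Type) (S' : Set ((ι × ℕ) × (ι × ℕ))) : Set (GS ι S') := Set.range Sum.inl

lemma Aset_closedDiscrete : IsClosedDiscreteSet (Aset ι S') := by
  constructor
  · rw [← isOpen_compl_iff, gs_isOpen_iff]
    intro a ha
    exact absurd ⟨a, rfl⟩ ha
  · refine discrete_of_sep _ fun x hx => ?_
    obtain ⟨⟨α, b⟩, rfl⟩ := hx
    refine ⟨Nb α b 0, isOpen_Nb α b 0, ?_⟩
    ext y
    constructor
    · rintro ⟨hy1 | ⟨s, rfl, -⟩, hy2⟩
      · exact hy1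
      · obtain ⟨a, ha⟩ := hy2
        cases ha
    · rintro rfl
      exact ⟨Or.inl rfl, ⟨(α, b), rfl⟩⟩

/-- The good set gives density: every pair of basic neighborhoods around a "row"
and a "column" point meet. -/
def HypDense (S' : Set ((ι × ℕ) × (ι × ℕ))) : Prop :=
  ∀ f g : ι → ℕ, ∃ q ∈ S', f q.1.1 ≤ q.1.2 ∧ g q.2.1 ≤ q.2.2

lemma gs_not_separated (hd : HypDense S') : ¬ IsSeparatedSet (Aset ι S') := by
  rintro ⟨U, hop, hmem, hdis⟩
  have key : ∀ a : ι × Bool, ∃ k : ℕ, ∀ s : S',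
      (pick a.2 s.val).1 = a.1 → k ≤ (pick a.2 s.val).2 → Sum.inr s ∈ U (Sum.inl a) :=
    fun a => gs_isOpen_iff.1 (hop _ ⟨a, rfl⟩) a (hmem _ ⟨a, rfl⟩)
  choose F hF using key
  obtain ⟨q, hqS, hq1, hq2⟩ := hd (fun α => F (α, false)) (fun α => F (α, true))
  have h1 : (Sum.inr ⟨q, hqS⟩ : GS ι S') ∈ U (Sum.inl (q.1.1, false)) :=
    hF (q.1.1, false) ⟨q, hqS⟩ rfl hq1
  have h2 : (Sum.inr ⟨q, hqS⟩ : GS ι S') ∈ U (Sum.inl (q.2.1, true)) :=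
    hF (q.2.1, true) ⟨q, hqS⟩ rfl hq2
  have hne : (Sum.inl (q.1.1, false) : GS ι S') ≠ Sum.inl (q.2.1, true) := by
    intro h
    simp only [Sum.inl.injEq, Prod.mk.injEq] at h
    exact Bool.noConfusion h.2
  exact Set.disjoint_left.1
    (hdis _ ⟨(q.1.1, false), rfl⟩ _ ⟨(q.2.1, true), rfl⟩ hne) h1 h2

/-- Key hypothesis for `<θ`-cwH, extracted from goodness. -/
def HypSmall (θ : Cardinal) (S' : Set ((ι × ℕ) × (ι × ℕ))) : Prop :=
  ∀ T ⊆ S', #T < θ → ∃ f g : ι → ℕ, ∀ q ∈ T, ¬(f q.1.1 ≤ q.1.2 ∧ g q.2.1 ≤ q.2.2)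

lemma gs_cwhlt {θ : Cardinal} (hθ : ℵ₀ < θ) (hs : HypSmall θ S') :
    @CwHLt (GS ι S') (gsTop ι S') θ := by
  intro D hD hDcard
  set I0 : Set ι := {α | Sum.inl (α, false) ∈ D} with hI0
  set I1 : Set ι := {α | Sum.inl (α, true) ∈ D} with hI1
  have hI0card : #I0 < θ := by
    refine lt_of_le_of_lt (Cardinal.mk_le_of_injective
      (f := fun x : I0 => (⟨Sum.inl (x.1, false), x.2⟩ : D)) ?_) hDcard
    intro x y h
    have h' := gs_inl_inj (congrArg Subtype.val h)
    exact Subtype.ext (congrArg Prod.fst h')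
  have hI1card : #I1 < θ := by
    refine lt_of_le_of_lt (Cardinal.mk_le_of_injective
      (f := fun x : I1 => (⟨Sum.inl (x.1, true), x.2⟩ : D)) ?_) hDcard
    intro x y h
    have h' := gs_inl_inj (congrArg Subtype.val h)
    exact Subtype.ext (congrArg Prod.fst h')
  set T : Set ((ι × ℕ) × (ι × ℕ)) := {q ∈ S' | q.1.1 ∈ I0 ∧ q.2.1 ∈ I1} with hT
  have hTcard : #T < θ := by
    have : #T ≤ #(I0 × I1 × ℕ × ℕ) := by
      refine Cardinal.mk_le_of_injective
        (f := fun x : T => ((⟨x.1.1.1, x.2.2.1⟩ : I0), (⟨x.1.2.1, x.2.2.2⟩ : I1),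
          x.1.1.2, x.1.2.2)) ?_
      rintro ⟨⟨⟨a, n⟩, ⟨b, m⟩⟩, hx⟩ ⟨⟨⟨a', n'⟩, ⟨b', m'⟩⟩, hy⟩ h
      simp only [Prod.mk.injEq, Subtype.mk.injEq] at h
      obtain ⟨h1, h2, h3, h4⟩ := h
      simp only [Subtype.mk.injEq, Prod.mk.injEq]
      exact ⟨⟨h1, h3⟩, h2, h4⟩
    refine lt_of_le_of_lt this ?_
    rw [Cardinal.mk_prod, Cardinal.mk_prod, Cardinal.mk_prod]
    simp only [Cardinal.lift_id, Cardinal.mk_nat]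
    refine Cardinal.mul_lt_of_lt hθ.le hI0card
      (Cardinal.mul_lt_of_lt hθ.le hI1card
        (Cardinal.mul_lt_of_lt hθ.le hθ hθ))
  obtain ⟨f, g, hfg⟩ := hs T (fun q hq => hq.1) hTcard
  -- the separating family
  set F : ι × Bool → ℕ := fun a => match a.2 with | false => f a.1 | true => g a.1 with hFdef
  set U : GS ι S' → Set (GS ι S') := fun x =>
    match x with
    | Sum.inl a => Nb a.1 a.2 (F a) \ (D \ {Sum.inl a})
    | Sum.inr s => {Sum.inr s} with hU
  have hDsub : ∀ x : GS ι S', IsClosed (D \ {x}) :=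
    fun x => (closedDiscrete_mono hD Set.diff_subset).1
  refine ⟨U, ?_, ?_, ?_⟩
  · rintro x -
    match x with
    | Sum.inl a => exact (isOpen_Nb a.1 a.2 (F a)).sdiff (hDsub _)
    | Sum.inr s => exact isOpen_singleton_inr_s3 s
  · rintro x -
    match x with
    | Sum.inl a => exact ⟨Or.inl rfl, fun h => h.2 rfl⟩
    | Sum.inr s => exact rfl
  · intro x hx y hy hxy
    rw [Set.disjoint_left]
    intro z hzx hzy
    match x, y with
    | Sum.inl a, Sum.inl a' =>
      rcases hzx.1 with rfl | ⟨s, rfl, hs1, hs2⟩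
      · -- z = inl a ∈ U (inl a'): either z = inl a' (contradiction) or z ∈ D \ {inl a'}
        rcases hzy.1 with he | ⟨s, he, -⟩
        · exact hxy (he ▸ rfl)
        · cases he
      · rcases hzy.1 with he | ⟨s', he, hs1', hs2'⟩
        · cases he
        · -- inr s in both basic neighborhoods
          cases he
          match a, a', hs1, hs2, hs1', hs2' with
          | (α, false), (α', false), hs1, hs2, hs1', hs2' =>
            exact hxy (by rw [show α = α' from hs1.symm.trans hs1'])
          | (α, true), (α', true), hs1, hs2, hs1', hs2' =>
            exact hxy (by rw [show α = α' from hs1.symm.trans hs1'])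
          | (α, false), (α', true), hs1, hs2, hs1', hs2' =>
            exact hfg s.val ⟨s.2, hs1 ▸ hx, hs1' ▸ hy⟩ ⟨hs1 ▸ hs2, hs1' ▸ hs2'⟩
          | (α, true), (α', false), hs1, hs2, hs1', hs2' =>
            exact hfg s.val ⟨s.2, hs1' ▸ hy, hs1 ▸ hx⟩ ⟨hs1' ▸ hs2', hs1 ▸ hs2⟩
    | Sum.inl a, Sum.inr s =>
      -- U y = {inr s}, so z = inr s ∈ D; it is excluded from U x
      have hz : z = Sum.inr s := hzy
      exact hzx.2 ⟨hz ▸ hy, by rw [hz]; exact fun h => Sum.inr_ne_inl h⟩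
    | Sum.inr s, Sum.inl a =>
      have hz : z = Sum.inr s := hzx
      exact hzy.2 ⟨hz ▸ hx, by rw [hz]; exact fun h => Sum.inr_ne_inl h⟩
    | Sum.inr s, Sum.inr s' =>
      exact hxy (hzx ▸ hzy ▸ rfl)

end GSpace

section MoreFan

variable {ι : Type}

lemma Bf_mono {f g : ι → ℕ} (hfg : ∀ α, f α ≤ g α) : Bf g ⊆ Bf f :=
  fun _ hx p hp => le_trans (hfg p.1) (hx p hp)

end MoreFan

section Backward

/-- From a first countable `<θ`-cwH, non-`≤θ`-cwH space, build a `θ`-good set. -/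
lemma good_of_space {θ : Cardinal} (hθ : ℵ₀ < θ) {ι : Type} (hι : #ι = θ)
    (X : Type) (t : TopologicalSpace X) (hfc : @FirstCountableTopology X t)
    (hlt : CwHLt X θ) (hnle : ¬ CwHLe X θ) :
    ∃ S : Set (Option (ι × ℕ) × Option (ι × ℕ)), IsThetaGood θ S := by
  classical
  rw [CwHLe] at hnle
  push_neg at hnle
  obtain ⟨A, hAcd, hAle, hAnsep⟩ := hnle
  have hAcard : #A = θ := by
    refine le_antisymm hAle (not_lt.1 fun hlt' => hAnsep (hlt A hAcd hlt'))
  have e : ι ≃ A := Classical.choice (Cardinal.eq.1 (hι.trans hAcard.symm))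
  -- antitone open neighborhood bases
  have hVex : ∀ x : X, ∃ V : ℕ → Set X, (∀ n, IsOpen (V n)) ∧ (∀ n, x ∈ V n) ∧
      Antitone V ∧ ∀ W ∈ nhds x, ∃ n, V n ⊆ W := by
    intro x
    haveI := hfc
    obtain ⟨u, hu⟩ := (nhds x).exists_antitone_basis
    refine ⟨fun n => interior (u n), fun n => isOpen_interior,
      fun n => mem_interior_iff_mem_nhds.2 (hu.toHasBasis.mem_of_mem trivial),
      fun n m hnm => interior_mono (hu.antitone hnm), fun W hW => ?_⟩
    obtain ⟨n, -, hn⟩ := hu.toHasBasis.mem_iff.1 hW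
    exact ⟨n, le_trans interior_subset hn⟩
  choose V hVopen hVmem hVanti hVbas using hVex
  set a : ι → X := fun α => (e α : X) with ha
  have hainj : Function.Injective a := fun α β h => e.injective (Subtype.ext h)
  have haA : ∀ α, a α ∈ A := fun α => (e α).2
  refine ⟨{p | ∃ q : (ι × ℕ) × (ι × ℕ), p = (some q.1, some q.2) ∧ q.1.1 ≠ q.2.1 ∧
    (V (a q.1.1) q.1.2 ∩ V (a q.2.1) q.2.2).Nonempty}, ?_, ?_⟩
  · rw [fan_closure_none]
    intro f g
    set h : ι → ℕ := fun α => max (f α) (g α) with hh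
    by_contra hcon
    push_neg at hcon
    have key : ∀ α β, α ≠ β → ¬(V (a α) (h α) ∩ V (a β) (h β)).Nonempty := by
      intro α β hne hn
      exact hcon (some (α, h α), some (β, h β)) ⟨((α, h α), (β, h β)), rfl, hne, hn⟩
        (some_mem_Bf.2 (le_max_left _ _)) (some_mem_Bf.2 (le_max_right _ _))
    refine hAnsep ⟨fun x => if hx : x ∈ A then V x (h (e.symm ⟨x, hx⟩)) else ∅,
      ?_, ?_, ?_⟩
    · intro x hx
      dsimp only
      rw [dif_pos hx]
      exact hVopen _ _
    · intro x hx
      dsimp only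
      rw [dif_pos hx]
      exact hVmem _ _
    · intro x hx y hy hxy
      dsimp only
      rw [dif_pos hx, dif_pos hy]
      have hne : e.symm ⟨x, hx⟩ ≠ e.symm ⟨y, hy⟩ :=
        fun hc => hxy (congrArg Subtype.val (e.symm.injective hc))
      have hax : a (e.symm ⟨x, hx⟩) = x := congrArg Subtype.val (e.apply_symm_apply _)
      have hay : a (e.symm ⟨y, hy⟩) = y := congrArg Subtype.val (e.apply_symm_apply _)
      have hkey := key _ _ hne
      rw [hax, hay] at hkey
      exact Set.disjoint_iff_inter_eq_empty.2 (Set.not_nonempty_iff_eq_empty.1 hkey)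
  · intro T hTS hTcard hmem
    rw [fan_closure_none] at hmem
    -- index set of T
    set I : Set ι := {α | ∃ p ∈ T, (∃ n, p.1 = some (α, n)) ∨ (∃ n, p.2 = some (α, n))}
      with hI
    have hIcard : #I < θ := by
      have hemb : #I ≤ #(T × Bool) := by
        refine Cardinal.mk_le_of_injective (f := fun x : I =>
          ((⟨Classical.choose x.2, (Classical.choose_spec x.2).1⟩ : T),
            if (∃ n, (Classical.choose x.2).1 = some (x.1, n)) then true else false)) ?_
        intro x y hxy
        have hp : Classical.choose x.2 = Classical.choose y.2 :=
          congrArg Subtype.val (congrArg Prod.fst hxy)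
        have hside := congrArg Prod.snd hxy
        simp only at hside
        by_cases hx1 : ∃ n, (Classical.choose x.2).1 = some (x.1, n)
        · rw [if_pos hx1] at hside
          by_cases hy1 : ∃ n, (Classical.choose y.2).1 = some (y.1, n)
          · obtain ⟨n, hn⟩ := hx1
            obtain ⟨m, hm⟩ := hy1
            rw [hp, hm] at hn
            apply Subtype.ext
            exact (congrArg Prod.fst (Option.some_injective _ hn)).symm
          · rw [if_neg hy1] at hside
            exact absurd hside.symm Bool.noConfusion
        · rw [if_neg hx1] at hside
          by_cases hy1 : ∃ n, (Classical.choose y.2).1 = some (y.1, n)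
          · rw [if_pos hy1] at hside
            exact absurd hside Bool.noConfusion
          · have hx2 : ∃ n, (Classical.choose x.2).2 = some (x.1, n) :=
              (Classical.choose_spec x.2).2.resolve_left hx1
            have hy2 : ∃ n, (Classical.choose y.2).2 = some (y.1, n) :=
              (Classical.choose_spec y.2).2.resolve_left hy1
            obtain ⟨n, hn⟩ := hx2
            obtain ⟨m, hm⟩ := hy2
            rw [hp, hm] at hn
            apply Subtype.ext
            exact (congrArg Prod.fst (Option.some_injective _ hn)).symm
      refine lt_of_le_of_lt hemb ?_
      rw [Cardinal.mk_prod]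
      simp only [Cardinal.lift_id, Cardinal.mk_bool]
      have h2 : (2 : Cardinal) < θ := lt_trans (by exact_mod_cast Cardinal.nat_lt_aleph0 2) hθ
      exact Cardinal.mul_lt_of_lt hθ.le hTcard h2
    set A' : Set X := a '' I with hA'
    have hA'sub : A' ⊆ A := by
      rintro x ⟨α, -, rfl⟩
      exact haA α
    have hA'cd : IsClosedDiscreteSet A' := closedDiscrete_mono hAcd hA'sub
    have hA'card : #A' < θ := lt_of_le_of_lt Cardinal.mk_image_le hIcard
    obtain ⟨U, hUo, hUm, hUd⟩ := hlt A' hA'cd hA'card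
    have hUnhds : ∀ α ∈ I, U (a α) ∈ nhds (a α) := by
      intro α hα
      exact (hUo _ ⟨α, hα, rfl⟩).mem_nhds (hUm _ ⟨α, hα, rfl⟩)
    set f : ι → ℕ := fun α =>
      if hα : α ∈ I then Classical.choose (hVbas (a α) (U (a α)) (hUnhds α hα)) else 0
      with hf
    have hfspec : ∀ α ∈ I, V (a α) (f α) ⊆ U (a α) := by
      intro α hα
      rw [hf]
      simp only [dif_pos hα]
      exact Classical.choose_spec (hVbas (a α) (U (a α)) (hUnhds α hα))
    obtain ⟨p, hpT, hp1, hp2⟩ := hmem f f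
    obtain ⟨q, rfl, hne, z, hz1, hz2⟩ := hTS hpT
    have hαI : q.1.1 ∈ I := ⟨_, hpT, Or.inl ⟨q.1.2, rfl⟩⟩
    have hβI : q.2.1 ∈ I := ⟨_, hpT, Or.inr ⟨q.2.2, rfl⟩⟩
    have hzU1 : z ∈ U (a q.1.1) :=
      hfspec _ hαI (hVanti _ (some_mem_Bf.1 hp1) hz1)
    have hzU2 : z ∈ U (a q.2.1) :=
      hfspec _ hβI (hVanti _ (some_mem_Bf.1 hp2) hz2)
    have hane : a q.1.1 ≠ a q.2.1 := fun hc => hne (hainj hc)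
    exact Set.disjoint_left.1
      (hUd _ ⟨q.1.1, hαI, rfl⟩ _ ⟨q.2.1, hβI, rfl⟩ hane) hzU1 hzU2

end Backward

end Aux3

/-- There is a `θ`-good subset of `F_{θ,ω} × F_{θ,ω}` iff there is a first
countable, `<θ`-cwH space that is not `≤θ`-cwH. -/
theorem statement3 (θ : Cardinal) (hθ : ℵ₀ < θ) :
    (∃ S : Set (Option (θ.ord.ToType × ℕ) × Option (θ.ord.ToType × ℕ)), IsThetaGood θ S) ↔
    (∃ (X : Type) (t : TopologicalSpace X),
      @FirstCountableTopology X t ∧ @CwHLt X t θ ∧ ¬ @CwHLe X t θ) := by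
  constructor
  · rintro ⟨S, hgood⟩
    set S' : Set ((θ.ord.ToType × ℕ) × (θ.ord.ToType × ℕ)) :=
      {q | (some q.1, some q.2) ∈ S} with hS'
    have hbad := not_closure_bad hθ hgood
    rw [fan_closure_none] at hbad
    push_neg at hbad
    obtain ⟨f₀, g₀, h₀⟩ := hbad
    have hdense : HypDense S' := by
      intro f g
      obtain ⟨p, hpS, hp1, hp2⟩ := fan_closure_none.1 hgood.1
        (fun α => max (f α) (f₀ α)) (fun α => max (g α) (g₀ α))
      have hpnd : ¬(p.1 = none ∨ p.2 = none) := by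
        intro hdeg
        exact h₀ p ⟨hpS, hdeg⟩
          (Bf_mono (fun α => le_max_right _ _) hp1)
          (Bf_mono (fun α => le_max_right _ _) hp2)
      match p, hpS, hp1, hp2, hpnd with
      | (none, _), _, _, _, hpnd => exact absurd (Or.inl rfl) hpnd
      | (some q1, none), _, _, _, hpnd => exact absurd (Or.inr rfl) hpnd
      | (some q1, some q2), hpS, hp1, hp2, _ =>
        exact ⟨(q1, q2), hpS,
          some_mem_Bf.1 (Bf_mono (fun α => le_max_left _ _) hp1),
          some_mem_Bf.1 (Bf_mono (fun α => le_max_left _ _) hp2)⟩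
    have hsmall : HypSmall θ S' := by
      intro T' hT'S' hcard
      have hTsub : (fun q : (θ.ord.ToType × ℕ) × (θ.ord.ToType × ℕ) =>
          ((some q.1 : Option (θ.ord.ToType × ℕ)),
            (some q.2 : Option (θ.ord.ToType × ℕ)))) '' T' ⊆ S := by
        rintro _ ⟨q, hq, rfl⟩
        exact hT'S' hq
      have hnotmem := hgood.2 _ hTsub (lt_of_le_of_lt Cardinal.mk_image_le hcard)
      rw [fan_closure_none] at hnotmem
      push_neg at hnotmem
      obtain ⟨f, g, hfg⟩ := hnotmem
      exact ⟨f, g, fun q hq hc =>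
        hfg _ ⟨q, hq, rfl⟩ (some_mem_Bf.2 hc.1) (some_mem_Bf.2 hc.2)⟩
    refine ⟨GS θ.ord.ToType S', gsTop θ.ord.ToType S', gs_firstCountable,
      gs_cwhlt hθ hsmall, ?_⟩
    intro hle
    have hcard : #(Aset θ.ord.ToType S') ≤ θ := by
      refine le_trans Cardinal.mk_range_le ?_
      have h1 : #(θ.ord.ToType × Bool) = #θ.ord.ToType * 2 := by
        rw [Cardinal.mk_prod]
        simp [Cardinal.mk_bool]
      rw [h1, mk_ord_toType]
      have h2 : (2 : Cardinal) ≤ θ :=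
        le_of_lt (lt_trans (by exact_mod_cast Cardinal.nat_lt_aleph0 2) hθ)
      rw [Cardinal.mul_eq_left hθ.le h2 (by norm_num)]
    exact gs_not_separated hdense (hle _ Aset_closedDiscrete hcard)
  · rintro ⟨X, t, hfc, hlt, hnle⟩
    exact good_of_space hθ (mk_ord_toType θ) X t hfc hlt hnle
end

section
/- Let θ be an uncountable cardinal. There exists a θ-good subset of F_{θ,ω} × F_{θ,ω} if and only if there exists a family ℋ = {H_{αβ} : α < β < θ} of finite closed-downward subsets of ω × ω such that (a) for every A ⊆ θ with |A| < θ there is f : θ → ω with (f(α),f(β)) ∉ H_{αβ} for all α < β in A, and (b) for every f : θ → ω there are α < β < θ with (f(α),f(β)) ∈ H_{αβ}. -/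
open Cardinal Set TopologicalSpace

section Statement4Helpers

open Cardinal Set

variable {ι : Type}

/-- `x` belongs to the basic neighborhood `B_f` of `*` in the fan. -/
def InBf (f : ι → ℕ) (x : Option (ι × ℕ)) : Prop :=
  ∀ q : ι × ℕ, x = some q → f q.1 ≤ q.2

lemma inBf_none (f : ι → ℕ) : InBf f (none : Option (ι × ℕ)) :=
  fun _ h => by cases h

lemma inBf_some {f : ι → ℕ} {q : ι × ℕ} : InBf f (some q) ↔ f q.1 ≤ q.2 :=
  ⟨fun h => h q rfl, fun h q' e => by cases e; exact h⟩

lemma inBf_mono {f f' : ι → ℕ} (h : ∀ a, f a ≤ f' a) {x : Option (ι × ℕ)}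
    (hx : InBf f' x) : InBf f x :=
  fun q e => le_trans (h q.1) (hx q e)

/-- The set `X` meets the basic neighborhood `B_f × B_g` of `(*,*)`. -/
def MeetsBf (X : Set (Option (ι × ℕ) × Option (ι × ℕ))) (f g : ι → ℕ) : Prop :=
  ∃ p ∈ X, InBf f p.1 ∧ InBf g p.2

lemma meetsBf_mono_set {X Y : Set (Option (ι × ℕ) × Option (ι × ℕ))} (h : X ⊆ Y)
    {f g : ι → ℕ} (hm : MeetsBf X f g) : MeetsBf Y f g := by
  obtain ⟨p, hp, h1, h2⟩ := hm
  exact ⟨p, h hp, h1, h2⟩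

lemma isOpen_Bf_s4 (f : ι → ℕ) : @IsOpen _ (fanTopology ι) {x | InBf f x} :=
  fun _ => ⟨f, fun _ hp => inBf_some.2 hp⟩

lemma mem_closure_iff_meetsBf (X : Set (Option (ι × ℕ) × Option (ι × ℕ))) :
    (none, none) ∈ @closure _ (fanSqTopology ι) X ↔ ∀ f g, MeetsBf X f g := by
  letI t : TopologicalSpace (Option (ι × ℕ)) := fanTopology ι
  letI : TopologicalSpace (Option (ι × ℕ) × Option (ι × ℕ)) := fanSqTopology ι
  have hts : fanSqTopology ι = @instTopologicalSpaceProd _ _ t t := rfl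
  rw [mem_closure_iff]
  constructor
  · intro h f g
    have hO : IsOpen ({x | InBf f x} ×ˢ {x | InBf g x}) :=
      @IsOpen.prod _ _ t t _ _ (isOpen_Bf_s4 f) (isOpen_Bf_s4 g)
    obtain ⟨p, hpO, hpX⟩ := h _ hO ⟨inBf_none f, inBf_none g⟩
    exact ⟨p, hpX, hpO.1, hpO.2⟩
  · intro h O hO hmem
    obtain ⟨u, v, hu, hv, hnu, hnv, huv⟩ :=
      (@isOpen_prod_iff _ _ t t O).1 hO none none hmem
    obtain ⟨f, hf⟩ := hu hnu
    obtain ⟨g, hg⟩ := hv hnv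
    obtain ⟨p, hpX, h1, h2⟩ := h f g
    refine ⟨p, huv (Set.mk_mem_prod ?_ ?_), hpX⟩
    · cases hx : p.1 with
      | none => exact hnu
      | some q => exact hf q (inBf_some.1 (hx ▸ h1))
    · cases hx : p.2 with
      | none => exact hnv
      | some q => exact hg q (inBf_some.1 (hx ▸ h2))

lemma unbdd_of_not_finite {s : Set ℕ} (hs : ¬ s.Finite) (b : ℕ) : ∃ n ∈ s, b ≤ n := by
  by_contra h
  push_neg at h
  exact hs ((Set.finite_Iio b).subset fun n hn => h n hn)

lemma mk_set_prod {α β : Type} (s : Set α) (t : Set β) : #(↥(s ×ˢ t)) = #s * #t := by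
  rw [Cardinal.mk_congr (Equiv.Set.prod s t), Cardinal.mk_prod, Cardinal.lift_id,
    Cardinal.lift_id]

/-- Split a fiber with bounded first coordinates into a `c`-column part and a finite part. -/
lemma split_fiber (G : Set (ℕ × ℕ)) (k : ℕ) (hG : ∀ nm ∈ G, nm.1 < k) :
    ∃ (c : ℕ) (C B : Set (ℕ × ℕ)), G ⊆ C ∪ B ∧ C ⊆ G ∧ B ⊆ G ∧ B.Finite ∧
      (∀ nm ∈ C, nm.1 ≤ c) ∧ ∀ nm ∈ C, ∀ b : ℕ, ∃ m, b ≤ m ∧ (c, m) ∈ C := by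
  classical
  set M : ℕ → Set ℕ := fun j => {m | ∃ n, j ≤ n ∧ (n, m) ∈ G} with hM
  by_cases h0 : (M 0).Finite
  · refine ⟨0, ∅, G, by simp, by simp, le_refl G, ?_, by simp, by simp⟩
    have : G ⊆ (Set.Iio k) ×ˢ (M 0) := by
      intro nm hnm
      exact ⟨hG nm hnm, ⟨nm.1, Nat.zero_le _, by simpa using hnm⟩⟩
    exact Set.Finite.subset ((Set.finite_Iio k).prod h0) this
  · have hex : ∃ j, (M j).Finite := by
      refine ⟨k, Set.Finite.subset Set.finite_empty ?_⟩
      rintro m ⟨n, hkn, hnm⟩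
      exact absurd (hG _ hnm) (not_lt.2 hkn)
    set d := Nat.find hex with hd
    have hd_fin : (M d).Finite := Nat.find_spec hex
    have hd_pos : d ≠ 0 := fun h => h0 (h ▸ hd_fin)
    set c := d - 1 with hc
    have hcd : c + 1 = d := Nat.succ_pred_eq_of_ne_zero hd_pos
    have hc_inf : ¬ (M c).Finite := Nat.find_min hex (by omega)
    refine ⟨c, {nm ∈ G | nm.1 ≤ c}, {nm ∈ G | c < nm.1}, ?_, fun nm h => h.1,
      fun nm h => h.1, ?_, fun nm h => h.2, ?_⟩
    · intro nm hnm
      by_cases h' : nm.1 ≤ c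
      · exact Or.inl ⟨hnm, h'⟩
      · exact Or.inr ⟨hnm, not_le.1 h'⟩
    · have hsub : {nm ∈ G | c < nm.1} ⊆ (Set.Iio k) ×ˢ (M (c + 1)) := by
        rintro nm ⟨hnm, hcnm⟩
        exact ⟨hG nm hnm, ⟨nm.1, hcnm, by simpa using hnm⟩⟩
      exact Set.Finite.subset ((Set.finite_Iio k).prod (hcd ▸ hd_fin)) hsub
    · intro nm _ b
      have hdiff : ¬ (M c \ M (c + 1)).Finite := by
        intro hfin
        exact hc_inf (Set.Finite.subset (hfin.union (hcd ▸ hd_fin))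
          (fun m hm => by by_cases h' : m ∈ M (c+1); exact Or.inr h'; exact Or.inl ⟨hm, h'⟩))
      obtain ⟨m, hm, hbm⟩ := unbdd_of_not_finite hdiff b
      obtain ⟨⟨n, hcn, hnG⟩, hnot⟩ := hm
      have hn : n = c := by
        by_contra h'
        exact hnot ⟨n, by omega, hnG⟩
      refine ⟨m, hbm, ⟨hn ▸ hnG, le_refl c⟩⟩

/-- The row version of `split_fiber`. -/
lemma split_fiber_row (G : Set (ℕ × ℕ)) (k : ℕ) (hG : ∀ nm ∈ G, nm.2 < k) :
    ∃ (c : ℕ) (C B : Set (ℕ × ℕ)), G ⊆ C ∪ B ∧ C ⊆ G ∧ B ⊆ G ∧ B.Finite ∧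
      (∀ nm ∈ C, nm.2 ≤ c) ∧ ∀ nm ∈ C, ∀ b : ℕ, ∃ n, b ≤ n ∧ (n, c) ∈ C := by
  obtain ⟨c, C, B, h1, h2, h3, h4, h5, h6⟩ :=
    split_fiber (Prod.swap '' G) k (by rintro nm ⟨q, hq, rfl⟩; exact hG q hq)
  refine ⟨c, Prod.swap '' C, Prod.swap '' B, ?_, ?_, ?_, h4.image _, ?_, ?_⟩
  · intro nm hnm
    have : nm.swap ∈ C ∪ B := h1 ⟨nm, hnm, rfl⟩
    rcases this with h | h
    · exact Or.inl ⟨nm.swap, h, Prod.swap_swap nm⟩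
    · exact Or.inr ⟨nm.swap, h, Prod.swap_swap nm⟩
  · rintro nm ⟨q, hq, rfl⟩
    obtain ⟨r, hr, hrq⟩ := h2 hq
    rwa [show r = q.swap from by rw [← hrq, Prod.swap_swap]] at hr
  · rintro nm ⟨q, hq, rfl⟩
    obtain ⟨r, hr, hrq⟩ := h3 hq
    rwa [show r = q.swap from by rw [← hrq, Prod.swap_swap]] at hr
  · rintro nm ⟨q, hq, rfl⟩
    exact h5 q hq
  · rintro nm ⟨q, hq, rfl⟩ b
    obtain ⟨m, hbm, hmc⟩ := h6 q hq b
    exact ⟨m, hbm, ⟨(c, m), hmc, rfl⟩⟩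

theorem forward_good (θ : Cardinal) (hθ : ℵ₀ < θ) {ι : Type} [LinearOrder ι]
    (S : Set (Option (ι × ℕ) × Option (ι × ℕ)))
    (G1 : ∀ f g : ι → ℕ, MeetsBf S f g)
    (G2 : ∀ T ⊆ S, #T < θ → ∃ f g : ι → ℕ, ¬ MeetsBf T f g) :
    ∃ H : ι → ι → Set (ℕ × ℕ),
      (∀ α β : ι, α < β → (H α β).Finite ∧ IsCDW (H α β)) ∧
      (∀ A : Set ι, #A < θ →
        ∃ f : ι → ℕ, ∀ α ∈ A, ∀ β ∈ A, α < β → (f α, f β) ∉ H α β) ∧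
      (∀ f : ι → ℕ, ∃ α β : ι, α < β ∧ (f α, f β) ∈ H α β) := by
  classical
  -- Symmetrize `S`.
  set S' : Set (Option (ι × ℕ) × Option (ι × ℕ)) := S ∪ {p | (p.2, p.1) ∈ S} with hS'def
  have hsymm : ∀ p ∈ S', ((p.2, p.1) : Option (ι × ℕ) × Option (ι × ℕ)) ∈ S' := by
    rintro ⟨x, y⟩ (h | h)
    · exact Or.inr h
    · exact Or.inl h
  have G1' : ∀ f g : ι → ℕ, MeetsBf S' f g := fun f g =>
    meetsBf_mono_set Set.subset_union_left (G1 f g)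
  have G2' : ∀ T ⊆ S', #T < θ → ∃ f g : ι → ℕ, ¬ MeetsBf T f g := by
    intro T hTS hTθ
    obtain ⟨f₁, g₁, h₁⟩ := G2 (T ∩ S) Set.inter_subset_right
      (lt_of_le_of_lt (Cardinal.mk_le_mk_of_subset Set.inter_subset_left) hTθ)
    have hsub1 : ((fun p : Option (ι × ℕ) × Option (ι × ℕ) => (p.2, p.1)) '' (T \ S)) ⊆ S := by
      rintro q ⟨p, ⟨hpT, hpS⟩, rfl⟩
      rcases hTS hpT with h | h
      · exact absurd h hpS
      · exact h
    have hcard1 : #((fun p : Option (ι × ℕ) × Option (ι × ℕ) => (p.2, p.1)) '' (T \ S)) < θ :=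
      lt_of_le_of_lt (le_trans Cardinal.mk_image_le
        (Cardinal.mk_le_mk_of_subset Set.diff_subset)) hTθ
    obtain ⟨f₂, g₂, h₂⟩ := G2
      ((fun p : Option (ι × ℕ) × Option (ι × ℕ) => (p.2, p.1)) '' (T \ S)) hsub1 hcard1
    refine ⟨fun a => max (f₁ a) (g₂ a), fun a => max (g₁ a) (f₂ a), ?_⟩
    rintro ⟨p, hp, hp1, hp2⟩
    by_cases hpS : p ∈ S
    · exact h₁ ⟨p, ⟨hp, hpS⟩, inBf_mono (fun a => le_max_left _ _) hp1,
        inBf_mono (fun a => le_max_left _ _) hp2⟩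
    · exact h₂ ⟨(p.2, p.1), ⟨p, ⟨hp, hpS⟩, rfl⟩,
        inBf_mono (fun a => le_max_right _ _) hp2,
        inBf_mono (fun a => le_max_right _ _) hp1⟩
  clear G1 G2
  -- The fibers of `S'`.
  set F : ι → ι → Set (ℕ × ℕ) := fun α β =>
    {nm | ((some (α, nm.1), some (β, nm.2)) : Option (ι × ℕ) × Option (ι × ℕ)) ∈ S'}
    with hFdef
  -- Step A: no fiber is unbounded in both coordinates simultaneously.
  have stepA : ∀ α β : ι, ∃ k : ℕ, ∀ nm ∈ F α β, nm.1 < k ∨ nm.2 < k := by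
    intro α β
    by_contra hcon
    push_neg at hcon
    obtain ⟨f, g, hfg⟩ := G2' ((fun nm : ℕ × ℕ =>
        ((some (α, nm.1), some (β, nm.2)) : Option (ι × ℕ) × Option (ι × ℕ))) '' F α β)
      (by rintro p ⟨nm, hnm, rfl⟩; exact hnm)
      (lt_of_le_of_lt (((F α β).to_countable.image _).le_aleph0) hθ)
    obtain ⟨nm, hnm, hk1, hk2⟩ := hcon (max (f α) (g β))
    exact hfg ⟨_, ⟨nm, hnm, rfl⟩, inBf_some.2 (le_trans (le_max_left _ _) hk1),
      inBf_some.2 (le_trans (le_max_right _ _) hk2)⟩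
  choose k hk using stepA
  -- Split each fiber in a part with bounded first coordinate, and the rest.
  set F₁ : ι → ι → Set (ℕ × ℕ) := fun α β => {nm ∈ F α β | nm.1 < k α β} with hF1def
  set F₂ : ι → ι → Set (ℕ × ℕ) := fun α β => {nm ∈ F α β | k α β ≤ nm.1} with hF2def
  have hF₂bd : ∀ α β, ∀ nm ∈ F₂ α β, nm.2 < k α β := by
    intro α β nm hnm
    rcases hk α β nm hnm.1 with h | h
    · exact absurd h (not_lt.2 hnm.2)
    · exact h
  have hcolsplit := fun α β => split_fiber (F₁ α β) (k α β) (fun nm hnm => hnm.2)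
  choose c Ccol Bcol hc1 hc2 hc3 hc4 hc5 hc6 using hcolsplit
  have hrowsplit := fun α β => split_fiber_row (F₂ α β) (k α β) (hF₂bd α β)
  choose c' Rrow Brow hr1 hr2 hr3 hr4 hr5 hr6 using hrowsplit
  -- `(*,*)` is not a member of `S'`.
  have hnn : ((none, none) : Option (ι × ℕ) × Option (ι × ℕ)) ∉ S' := by
    intro hmem
    obtain ⟨f, g, hfg⟩ := G2' {((none, none) : Option (ι × ℕ) × Option (ι × ℕ))}
      (Set.singleton_subset_iff.2 hmem)
      (by rw [Cardinal.mk_singleton]; exact lt_trans Cardinal.one_lt_aleph0 hθ)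
    exact hfg ⟨_, rfl, inBf_none f, inBf_none g⟩
  -- The fibers over `*` are bounded.
  set Y : ι → Set ℕ := fun α =>
    {n | ((none, some (α, n)) : Option (ι × ℕ) × Option (ι × ℕ)) ∈ S'} with hYdef
  have hYbd : ∀ α : ι, ∃ N, ∀ n ∈ Y α, n < N := by
    intro α
    by_cases hfin : (Y α).Finite
    · obtain ⟨N, hN⟩ := hfin.bddAbove
      exact ⟨N + 1, fun n hn => Nat.lt_succ_of_le (hN hn)⟩
    · exfalso
      obtain ⟨f, g, hfg⟩ := G2' ((fun n : ℕ =>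
          ((none, some (α, n)) : Option (ι × ℕ) × Option (ι × ℕ))) '' Y α)
        (by rintro p ⟨n, hn, rfl⟩; exact hn)
        (lt_of_le_of_lt (((Y α).to_countable.image _).le_aleph0) hθ)
      obtain ⟨n, hn, hgn⟩ := unbdd_of_not_finite hfin (g α)
      exact hfg ⟨_, ⟨n, hn, rfl⟩, inBf_none f, inBf_some.2 hgn⟩
  choose g₀ hg₀ using hYbd
  -- The column heights with fixed `α` are bounded.
  have hColBd : ∀ α : ι, ∃ N : ℕ, ∀ β : ι, α < β → ∀ nm ∈ Ccol α β, c α β < N := by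
    intro α
    by_contra hcon
    push_neg at hcon
    choose βf hβf nmf hnmf hNc using hcon
    have hsub2 : (⋃ N : ℕ, (fun nm : ℕ × ℕ =>
        ((some (α, nm.1), some (βf N, nm.2)) : Option (ι × ℕ) × Option (ι × ℕ)))
        '' Ccol α (βf N)) ⊆ S' := by
      intro p hp
      simp only [Set.mem_iUnion, Set.mem_image] at hp
      obtain ⟨N, nm, hnm, rfl⟩ := hp
      exact ((hc2 α (βf N)) hnm).1
    have hcard2 : #(⋃ N : ℕ, (fun nm : ℕ × ℕ =>
        ((some (α, nm.1), some (βf N, nm.2)) : Option (ι × ℕ) × Option (ι × ℕ)))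
        '' Ccol α (βf N)) < θ := lt_of_le_of_lt
      ((Set.countable_iUnion (fun N => (Set.to_countable _).image _)).le_aleph0) hθ
    obtain ⟨f, g, hfg⟩ := G2' _ hsub2 hcard2
    obtain ⟨m, hgm, hcm⟩ := hc6 α (βf (f α)) (nmf (f α)) (hnmf (f α)) (g (βf (f α)))
    exact hfg ⟨_, Set.mem_iUnion.2 ⟨f α, ⟨(c α (βf (f α)), m), hcm, rfl⟩⟩,
      inBf_some.2 (hNc (f α)), inBf_some.2 hgm⟩
  choose f₂ hf₂ using hColBd
  -- The row widths with fixed `β` are bounded.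
  have hRowBd : ∀ β : ι, ∃ N : ℕ, ∀ α : ι, α < β → ∀ nm ∈ Rrow α β, c' α β < N := by
    intro β
    by_contra hcon
    push_neg at hcon
    choose αf hαf nmf hnmf hNc using hcon
    have hsub3 : (⋃ N : ℕ, (fun nm : ℕ × ℕ =>
        ((some (αf N, nm.1), some (β, nm.2)) : Option (ι × ℕ) × Option (ι × ℕ)))
        '' Rrow (αf N) β) ⊆ S' := by
      intro p hp
      simp only [Set.mem_iUnion, Set.mem_image] at hp
      obtain ⟨N, nm, hnm, rfl⟩ := hp
      exact ((hr2 (αf N) β) hnm).1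
    have hcard3 : #(⋃ N : ℕ, (fun nm : ℕ × ℕ =>
        ((some (αf N, nm.1), some (β, nm.2)) : Option (ι × ℕ) × Option (ι × ℕ)))
        '' Rrow (αf N) β) < θ := lt_of_le_of_lt
      ((Set.countable_iUnion (fun N => (Set.to_countable _).image _)).le_aleph0) hθ
    obtain ⟨f, g, hfg⟩ := G2' _ hsub3 hcard3
    obtain ⟨n, hfn, hcn⟩ := hr6 (αf (g β)) β (nmf (g β)) (hnmf (g β)) (f (αf (g β)))
    exact hfg ⟨_, Set.mem_iUnion.2 ⟨g β, ⟨(n, c' (αf (g β)) β), hcn, rfl⟩⟩,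
      inBf_some.2 hfn, inBf_some.2 (hNc (g β))⟩
  choose g₂ hg₂ using hRowBd
  -- The family `H`.
  refine ⟨fun α β => {ab : ℕ × ℕ | ∃ nm ∈ Bcol α β ∪ Brow α β, ab.1 ≤ nm.1 ∧ ab.2 ≤ nm.2},
    fun α β _ => ⟨?_, ?_⟩, ?_, ?_⟩
  · -- finiteness
    refine Set.Finite.subset (Set.Finite.biUnion ((hc4 α β).union (hr4 α β))
      (fun nm _ => (Set.finite_Iic nm.1).prod (Set.finite_Iic nm.2))) ?_
    rintro ab ⟨nm, hnm, h1, h2⟩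
    exact Set.mem_biUnion hnm ⟨h1, h2⟩
  · -- closed downward
    rintro ab ⟨nm, hnm, h1, h2⟩ q hq1 hq2
    exact ⟨nm, hnm, le_trans hq1 h1, le_trans hq2 h2⟩
  · -- property (a)
    intro A hA
    set Tbd : Set (Option (ι × ℕ) × Option (ι × ℕ)) := {p | ∃ α ∈ A, ∃ β ∈ A, α < β ∧
      ∃ nm ∈ Bcol α β ∪ Brow α β,
        p = ((some (α, nm.1), some (β, nm.2)) : Option (ι × ℕ) × Option (ι × ℕ))}
      with hTbddef
    have hsub4 : Tbd ⊆ S' := by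
      rintro p ⟨α, hα, β, hβ, hab, nm, hnm, rfl⟩
      rcases hnm with hB | hB
      · exact ((hc3 α β) hB).1
      · exact ((hr3 α β) hB).1
    have hcard4 : #Tbd < θ := by
      have hsub : Tbd ⊆ (fun w : (ι × ι) × (ℕ × ℕ) =>
          ((some (w.1.1, w.2.1), some (w.1.2, w.2.2)) : Option (ι × ℕ) × Option (ι × ℕ)))
          '' ((A ×ˢ A) ×ˢ (Set.univ : Set (ℕ × ℕ))) := by
        rintro p ⟨α, hα, β, hβ, hab, nm, hnm, rfl⟩
        exact ⟨((α, β), nm), ⟨⟨hα, hβ⟩, trivial⟩, rfl⟩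
      refine lt_of_le_of_lt (le_trans (Cardinal.mk_le_mk_of_subset hsub)
        Cardinal.mk_image_le) ?_
      rw [mk_set_prod, mk_set_prod]
      refine Cardinal.mul_lt_of_lt hθ.le (Cardinal.mul_lt_of_lt hθ.le hA hA) ?_
      rw [Cardinal.mk_univ]
      exact lt_of_le_of_lt Cardinal.mk_le_aleph0 hθ
    obtain ⟨f, g, hfg⟩ := G2' Tbd hsub4 hcard4
    refine ⟨fun a => max (f a) (g a), ?_⟩
    rintro α hα β hβ hab ⟨nm, hnm, h1, h2⟩
    exact hfg ⟨_, ⟨α, hα, β, hβ, hab, nm, hnm, rfl⟩,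
      inBf_some.2 (le_trans (le_max_left _ _) h1),
      inBf_some.2 (le_trans (le_max_right _ _) h2)⟩
  · -- property (b)
    intro f
    set h : ι → ℕ := fun a => max (f a) (max (g₀ a) (max (k a a) (max (f₂ a) (g₂ a))))
      with hhdef
    have hf_le : ∀ a, f a ≤ h a := fun a => le_max_left _ _
    have hg₀_le : ∀ a, g₀ a ≤ h a := fun a =>
      le_trans (le_max_left _ _) (le_max_right _ _)
    have hk_le : ∀ a, k a a ≤ h a := fun a =>
      le_trans (le_trans (le_max_left _ _) (le_max_right _ _)) (le_max_right _ _)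
    have hf₂_le : ∀ a, f₂ a ≤ h a := fun a =>
      le_trans (le_trans (le_trans (le_max_left _ _) (le_max_right _ _))
        (le_max_right _ _)) (le_max_right _ _)
    have hg₂_le : ∀ a, g₂ a ≤ h a := fun a =>
      le_trans (le_trans (le_trans (le_max_right _ _) (le_max_right _ _))
        (le_max_right _ _)) (le_max_right _ _)
    have key : ∀ α β : ι, α < β → ∀ n m : ℕ, (n, m) ∈ F α β → h α ≤ n → h β ≤ m →
        (f α, f β) ∈ {ab : ℕ × ℕ | ∃ nm ∈ Bcol α β ∪ Brow α β,
          ab.1 ≤ nm.1 ∧ ab.2 ≤ nm.2} := by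
      intro α β hab n m hF hn hm
      by_cases hcase : n < k α β
      · rcases hc1 α β (show (n, m) ∈ F₁ α β from ⟨hF, hcase⟩) with hC | hB
        · exact absurd (lt_of_lt_of_le (hf₂ α β hab (n, m) hC)
            (le_trans (hf₂_le α) hn)) (not_lt.2 (hc5 α β (n, m) hC))
        · exact ⟨(n, m), Or.inl hB, le_trans (hf_le α) hn, le_trans (hf_le β) hm⟩
      · rcases hr1 α β (show (n, m) ∈ F₂ α β from ⟨hF, not_lt.1 hcase⟩) with hR | hB
        · exact absurd (lt_of_lt_of_le (hg₂ β α hab (n, m) hR)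
            (le_trans (hg₂_le β) hm)) (not_lt.2 (hr5 α β (n, m) hR))
        · exact ⟨(n, m), Or.inr hB, le_trans (hf_le α) hn, le_trans (hf_le β) hm⟩
    obtain ⟨⟨x, y⟩, hpS, hp1, hp2⟩ := G1' h h
    cases x with
    | none => cases y with
      | none => exact absurd hpS hnn
      | some r =>
        exfalso
        rcases r with ⟨β, m⟩
        exact absurd (inBf_some.1 hp2)
          (not_le.2 (lt_of_lt_of_le (hg₀ β m hpS) (hg₀_le β)))
    | some q => cases y with
      | none =>
        exfalso
        rcases q with ⟨α, n⟩
        have hpS' := hsymm _ hpS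
        exact absurd (inBf_some.1 hp1)
          (not_le.2 (lt_of_lt_of_le (hg₀ α n hpS') (hg₀_le α)))
      | some r =>
        rcases q with ⟨α, n⟩
        rcases r with ⟨β, m⟩
        rcases lt_trichotomy α β with hlt | heq | hgt
        · exact ⟨α, β, hlt, key α β hlt n m hpS (inBf_some.1 hp1) (inBf_some.1 hp2)⟩
        · exfalso
          subst heq
          rcases hk α α (n, m) hpS with h' | h'
          · exact absurd (le_trans (hk_le α) (inBf_some.1 hp1)) (not_le.2 h')
          · exact absurd (le_trans (hk_le α) (inBf_some.1 hp2)) (not_le.2 h')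
        · have hpS' := hsymm _ hpS
          exact ⟨β, α, hgt, key β α hgt m n hpS' (inBf_some.1 hp2) (inBf_some.1 hp1)⟩

end Statement4Helpers

/-- There is a `θ`-good subset of `F_{θ,ω} × F_{θ,ω}` iff there is a family
`ℋ = {H_{αβ} : α < β < θ}` of finite c.d.w. subsets of `ω × ω` satisfying (a) and (b). -/
theorem statement4 (θ : Cardinal) (hθ : ℵ₀ < θ) :
    (∃ S : Set (Option (θ.ord.ToType × ℕ) × Option (θ.ord.ToType × ℕ)), IsThetaGood θ S) ↔
    (∃ H : θ.ord.ToType → θ.ord.ToType → Set (ℕ × ℕ),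
      (∀ α β : θ.ord.ToType, α < β → (H α β).Finite ∧ IsCDW (H α β)) ∧
      (∀ A : Set θ.ord.ToType, #A < θ →
        ∃ f : θ.ord.ToType → ℕ, ∀ α ∈ A, ∀ β ∈ A, α < β → (f α, f β) ∉ H α β) ∧
      (∀ f : θ.ord.ToType → ℕ, ∃ α β : θ.ord.ToType, α < β ∧ (f α, f β) ∈ H α β)) := by
  constructor
  · rintro ⟨S, hS⟩
    obtain ⟨h1, h2⟩ := hS
    have G1 := (mem_closure_iff_meetsBf S).1 h1
    have G2 : ∀ T ⊆ S, #T < θ → ∃ f g : θ.ord.ToType → ℕ, ¬ MeetsBf T f g := by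
      intro T hTS hT
      by_contra hcon
      push_neg at hcon
      exact h2 T hTS hT ((mem_closure_iff_meetsBf T).2 hcon)
    exact forward_good θ hθ S G1 G2
  · rintro ⟨H, hHfc, ha, hb⟩
    refine ⟨{p | ∃ α β : θ.ord.ToType, ∃ n m : ℕ, α < β ∧ (n, m) ∈ H α β ∧
      p = ((some (α, n), some (β, m)) :
        Option (θ.ord.ToType × ℕ) × Option (θ.ord.ToType × ℕ))}, ?_, ?_⟩
    · rw [mem_closure_iff_meetsBf]
      intro f g
      obtain ⟨α, β, hab, hH⟩ := hb (fun a => max (f a) (g a))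
      have hfg : (f α, g β) ∈ H α β := (hHfc α β hab).2 _ hH (f α, g β)
        (le_max_left _ _) (le_max_right _ _)
      exact ⟨_, ⟨α, β, f α, g β, hab, hfg, rfl⟩, inBf_some.2 le_rfl, inBf_some.2 le_rfl⟩
    · intro T hTS hT
      rw [mem_closure_iff_meetsBf]
      obtain ⟨α₀, -, -, -⟩ := hb (fun _ => 0)
      set e1 : Option (θ.ord.ToType × ℕ) × Option (θ.ord.ToType × ℕ) → θ.ord.ToType :=
        fun p => (p.1.getD (α₀, 0)).1 with he1
      set e2 : Option (θ.ord.ToType × ℕ) × Option (θ.ord.ToType × ℕ) → θ.ord.ToType :=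
        fun p => (p.2.getD (α₀, 0)).1 with he2
      have hAcard : #((e1 '' T ∪ e2 '' T : Set θ.ord.ToType)) < θ := lt_of_le_of_lt (Cardinal.mk_union_le _ _)
        (Cardinal.add_lt_of_lt hθ.le (lt_of_le_of_lt Cardinal.mk_image_le hT)
          (lt_of_le_of_lt Cardinal.mk_image_le hT))
      obtain ⟨f, hf⟩ := ha (e1 '' T ∪ e2 '' T) hAcard
      intro hcon
      obtain ⟨p, hpT, hp1, hp2⟩ := hcon f f
      obtain ⟨α, β, n, m, hab, hH, rfl⟩ := hTS hpT
      have hα : α ∈ e1 '' T ∪ e2 '' T := Or.inl ⟨_, hpT, rfl⟩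
      have hβ : β ∈ e1 '' T ∪ e2 '' T := Or.inr ⟨_, hpT, rfl⟩
      exact hf α hα β hβ hab ((hHfc α β hab).2 (n, m) hH (f α, f β)
        (inBf_some.1 hp1) (inBf_some.1 hp2))
end

section
/- Let θ be an uncountable cardinal and let S be a subset of F_{θ,ω} × F_{θ,ω} such that (*,*) is not in the closure of any countable subset of S. Then there exist functions h, g : θ → ω such that: for every α < θ, every n > h(α) and every β < θ, the set {m ∈ ω : ((α,n),(β,m)) ∈ S} is finite; and for every β < θ, every m > g(β) and every α < θ, the set {n ∈ ω : ((α,n),(β,m)) ∈ S} is finite. -/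
open Cardinal Set TopologicalSpace

lemma fan_mem_closure {ι : Type*} (T : Set (Option (ι × ℕ) × Option (ι × ℕ)))
    (h : ∀ f g : ι → ℕ, ∃ p q : ι × ℕ, f p.1 ≤ p.2 ∧ g q.1 ≤ q.2 ∧ (some p, some q) ∈ T) :
    ((none, none) : Option (ι × ℕ) × Option (ι × ℕ)) ∈ @closure _ (fanSqTopology ι) T := by
  letI : TopologicalSpace (Option (ι × ℕ)) := fanTopology ι
  have : fanSqTopology ι = instTopologicalSpaceProd := rfl
  rw [this, mem_closure_iff]
  intro U hU hmem
  obtain ⟨V, W, hV, hW, hnV, hnW, hVW⟩ := isOpen_prod_iff.mp hU none none hmem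
  have hV' : none ∈ V → ∃ f : ι → ℕ, ∀ p : ι × ℕ, f p.1 ≤ p.2 → some p ∈ V := hV
  have hW' : none ∈ W → ∃ g : ι → ℕ, ∀ p : ι × ℕ, g p.1 ≤ p.2 → some p ∈ W := hW
  obtain ⟨f, hf⟩ := hV' hnV
  obtain ⟨g, hg⟩ := hW' hnW
  obtain ⟨p, q, hp, hq, hpq⟩ := h f g
  exact ⟨(some p, some q), hVW ⟨hf p hp, hg q hq⟩, hpq⟩

lemma fan_key1 {ι : Type*} (S : Set (Option (ι × ℕ) × Option (ι × ℕ)))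
    (hS : ∀ T ⊆ S, T.Countable →
      ((none, none) : Option (ι × ℕ) × Option (ι × ℕ)) ∉ @closure _ (fanSqTopology ι) T)
    (α : ι) : {n : ℕ | ∃ β : ι, {m : ℕ | (some (α, n), some (β, m)) ∈ S}.Infinite}.Finite := by
  by_contra hfin
  have hN : {n : ℕ | ∃ β : ι, {m : ℕ | (some (α, n), some (β, m)) ∈ S}.Infinite}.Infinite := hfin
  set N := {n : ℕ | ∃ β : ι, {m : ℕ | (some (α, n), some (β, m)) ∈ S}.Infinite} with hNdef
  have h1 : ∀ n : ℕ, ∃ β : ι, n ∈ N → {m : ℕ | (some (α, n), some (β, m)) ∈ S}.Infinite := by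
    intro n
    by_cases hn : n ∈ N
    · exact hn.imp fun β hb _ => hb
    · exact ⟨α, fun h => absurd h hn⟩
  choose β hβ using h1
  set F : ℕ × ℕ → Option (ι × ℕ) × Option (ι × ℕ) :=
    fun q => (some (α, q.1), some (β q.1, q.2)) with hF
  have hTc : (S ∩ Set.range F).Countable :=
    (Set.countable_range F).mono Set.inter_subset_right
  refine hS (S ∩ Set.range F) Set.inter_subset_left hTc (fan_mem_closure _ ?_)
  intro f g
  obtain ⟨n, hnN, hfn⟩ := hN.exists_gt (f α)
  obtain ⟨m, hmS, hgm⟩ := (hβ n hnN).exists_gt (g (β n))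
  exact ⟨(α, n), (β n, m), hfn.le, hgm.le, ⟨hmS, ⟨(n, m), rfl⟩⟩⟩

lemma fan_key2 {ι : Type*} (S : Set (Option (ι × ℕ) × Option (ι × ℕ)))
    (hS : ∀ T ⊆ S, T.Countable →
      ((none, none) : Option (ι × ℕ) × Option (ι × ℕ)) ∉ @closure _ (fanSqTopology ι) T)
    (β : ι) : {m : ℕ | ∃ α : ι, {n : ℕ | (some (α, n), some (β, m)) ∈ S}.Infinite}.Finite := by
  by_contra hfin
  have hN : {m : ℕ | ∃ α : ι, {n : ℕ | (some (α, n), some (β, m)) ∈ S}.Infinite}.Infinite := hfin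
  set N := {m : ℕ | ∃ α : ι, {n : ℕ | (some (α, n), some (β, m)) ∈ S}.Infinite} with hNdef
  have h1 : ∀ m : ℕ, ∃ α : ι, m ∈ N → {n : ℕ | (some (α, n), some (β, m)) ∈ S}.Infinite := by
    intro m
    by_cases hm : m ∈ N
    · exact hm.imp fun α ha _ => ha
    · exact ⟨β, fun h => absurd h hm⟩
  choose α hα using h1
  set F : ℕ × ℕ → Option (ι × ℕ) × Option (ι × ℕ) :=
    fun q => (some (α q.1, q.2), some (β, q.1)) with hF
  have hTc : (S ∩ Set.range F).Countable :=
    (Set.countable_range F).mono Set.inter_subset_right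
  refine hS (S ∩ Set.range F) Set.inter_subset_left hTc (fan_mem_closure _ ?_)
  intro f g
  obtain ⟨m, hmN, hgm⟩ := hN.exists_gt (g β)
  obtain ⟨n, hnS, hfn⟩ := (hα m hmN).exists_gt (f (α m))
  exact ⟨(α m, n), (β, m), hfn.le, hgm.le, ⟨hnS, ⟨(m, n), rfl⟩⟩⟩

/-- Facts 1 and 2: If `(*,*)` is not in the closure of any countable subset
of `S ⊆ F_{θ,ω} × F_{θ,ω}`, then there are `h, g : θ → ω` as described. -/
theorem statement5 (θ : Cardinal) (hθ : ℵ₀ < θ)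
    (S : Set (Option (θ.ord.ToType × ℕ) × Option (θ.ord.ToType × ℕ)))
    (hS : ∀ T ⊆ S, T.Countable →
      ((none, none) : Option (θ.ord.ToType × ℕ) × Option (θ.ord.ToType × ℕ)) ∉
        @closure _ (fanSqTopology θ.ord.ToType) T) :
    ∃ h g : θ.ord.ToType → ℕ,
      (∀ α : θ.ord.ToType, ∀ n : ℕ, h α < n → ∀ β : θ.ord.ToType,
        {m : ℕ | (some (α, n), some (β, m)) ∈ S}.Finite) ∧
      (∀ β : θ.ord.ToType, ∀ m : ℕ, g β < m → ∀ α : θ.ord.ToType,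
        {n : ℕ | (some (α, n), some (β, m)) ∈ S}.Finite) := by
  classical
  refine ⟨fun α => (fan_key1 S hS α).toFinset.sup id,
    fun β => (fan_key2 S hS β).toFinset.sup id, ?_, ?_⟩
  · intro α n hn β
    by_contra hinf
    have hmem : n ∈ (fan_key1 S hS α).toFinset := by
      rw [Set.Finite.mem_toFinset]
      exact ⟨β, hinf⟩
    exact absurd (Finset.le_sup (f := id) hmem) (not_le.mpr hn)
  · intro β m hm α
    by_contra hinf
    have hmem : m ∈ (fan_key2 S hS β).toFinset := by
      rw [Set.Finite.mem_toFinset]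
      exact ⟨α, hinf⟩
    exact absurd (Finset.le_sup (f := id) hmem) (not_le.mpr hm)
end

section
/- Let θ be an uncountable cardinal and let T be a subset of F_{θ,ω} × F_{θ,ω} such that (*,*) is not in the closure of any countable subset of T, and such that for all α, β < θ: for each fixed n ∈ ω the set {m ∈ ω : ((α,n),(β,m)) ∈ T} is finite, and for each fixed m ∈ ω the set {n ∈ ω : ((α,n),(β,m)) ∈ T} is finite. Then for all α, β < θ the set {(n,m) ∈ ω × ω : ((α,n),(β,m)) ∈ T} is finite. -/
open Cardinal Set TopologicalSpace

/-- If `(*,*)` is not in the closure of any countable subset of `T`, and the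
horizontal and vertical sections of `T` over each pair `(α, β)` are finite, then each set
`{(n,m) : ((α,n),(β,m)) ∈ T}` is finite. -/
theorem statement6 (θ : Cardinal) (hθ : ℵ₀ < θ)
    (T : Set (Option (θ.ord.ToType × ℕ) × Option (θ.ord.ToType × ℕ)))
    (hT : ∀ T' ⊆ T, T'.Countable →
      ((none, none) : Option (θ.ord.ToType × ℕ) × Option (θ.ord.ToType × ℕ)) ∉
        @closure _ (fanSqTopology θ.ord.ToType) T')
    (hrow : ∀ α β : θ.ord.ToType, ∀ n : ℕ,
      {m : ℕ | (some (α, n), some (β, m)) ∈ T}.Finite)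
    (hcol : ∀ α β : θ.ord.ToType, ∀ m : ℕ,
      {n : ℕ | (some (α, n), some (β, m)) ∈ T}.Finite) :
    ∀ α β : θ.ord.ToType,
      {p : ℕ × ℕ | (some (α, p.1), some (β, p.2)) ∈ T}.Finite := by
  intro α β
  by_contra hinf
  set S : Set (ℕ × ℕ) := {p : ℕ × ℕ | (some (α, p.1), some (β, p.2)) ∈ T} with hSdef
  have hSinf : S.Infinite := hinf
  -- for all N M, there is p ∈ S with N ≤ p.1 and M ≤ p.2
  have hbig : ∀ N M : ℕ, ∃ p ∈ S, N ≤ p.1 ∧ M ≤ p.2 := by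
    intro N M
    have h1 : {p : ℕ × ℕ | p ∈ S ∧ p.1 < N}.Finite := by
      have hsub : {p : ℕ × ℕ | p ∈ S ∧ p.1 < N} ⊆
          ⋃ n ∈ Set.Iio N, (fun m => (n, m)) '' {m : ℕ | (some (α, n), some (β, m)) ∈ T} := by
        rintro ⟨n, m⟩ ⟨hS, hn⟩
        simp only [Set.mem_iUnion, Set.mem_image, Set.mem_setOf_eq, Set.mem_Iio]
        exact ⟨n, hn, m, hS, rfl⟩
      exact ((Set.finite_Iio N).biUnion (fun n _ => (hrow α β n).image _)).subset hsub
    have h2 : {p : ℕ × ℕ | p ∈ S ∧ p.2 < M}.Finite := by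
      have hsub : {p : ℕ × ℕ | p ∈ S ∧ p.2 < M} ⊆
          ⋃ m ∈ Set.Iio M, (fun n => (n, m)) '' {n : ℕ | (some (α, n), some (β, m)) ∈ T} := by
        rintro ⟨n, m⟩ ⟨hS, hm⟩
        simp only [Set.mem_iUnion, Set.mem_image, Set.mem_setOf_eq, Set.mem_Iio]
        exact ⟨m, hm, n, hS, rfl⟩
      exact ((Set.finite_Iio M).biUnion (fun m _ => (hcol α β m).image _)).subset hsub
    have := hSinf.diff (h1.union h2)
    obtain ⟨p, hp⟩ := this.nonempty
    refine ⟨p, hp.1, ?_, ?_⟩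
    · by_contra h; exact hp.2 (Or.inl ⟨hp.1, not_le.mp h⟩)
    · by_contra h; exact hp.2 (Or.inr ⟨hp.1, not_le.mp h⟩)
  -- define the countable subset T'
  set T' : Set (Option (θ.ord.ToType × ℕ) × Option (θ.ord.ToType × ℕ)) :=
    (fun p : ℕ × ℕ => ((some (α, p.1), some (β, p.2)))) '' S with hT'def
  have hT'sub : T' ⊆ T := by
    rintro x ⟨p, hp, rfl⟩; exact hp
  have hT'cnt : T'.Countable := (Set.to_countable S).image _
  apply hT T' hT'sub hT'cnt
  letI t1 : TopologicalSpace (Option (θ.ord.ToType × ℕ)) := fanTopology θ.ord.ToType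
  rw [mem_closure_iff]
  intro U hU hmem
  obtain ⟨V, W, hV, hW, hVn, hWn, hVW⟩ := isOpen_prod_iff.mp hU none none hmem
  obtain ⟨f, hf⟩ := hV hVn
  obtain ⟨g, hg⟩ := hW hWn
  obtain ⟨p, hpS, hp1, hp2⟩ := hbig (f α) (g β)
  refine ⟨(some (α, p.1), some (β, p.2)), ?_, ⟨p, hpS, rfl⟩⟩
  exact hVW ⟨hf (α, p.1) hp1, hg (β, p.2) hp2⟩
end
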